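/- Smoothness of V under tabular BN softmax parameterization: For any two tabular softmax BN policy parameter vectors θ̃ and θ, ‖∇_θ V(θ̃) − ∇_θ V(θ)‖₂ ≤ (8N(r_max − r_min)/(1−γ)³) · ‖θ̃ − θ‖₂; that is, V is (8N(r_max − r_min)/(1−γ)³)-smooth. -/

import Mathlib

open Filter Topology
open scoped BigOperators Classical

namespace BNPG

variable {S : Type} [Fintype S] [DecidableEq S] [Nonempty S]
variable {N : ℕ} {A : Fin N → Type} [∀ i, Fintype (A i)] [∀ i, DecidableEq (A i)]
  [∀ i, Nonempty (A i)]

/-- Joint actions of all agents. -/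
abbrev JointAct (A : Fin N → Type) : Type := (i : Fin N) → A i

/-- Parent actions of agent `i`, given the parent sets `P`. -/
abbrev ParAct (A : Fin N → Type) (P : Fin N → Finset (Fin N)) (i : Fin N) : Type :=
  (j : {x : Fin N // x ∈ P i}) → A j.val

/-- Restriction of a joint action to agent `i`'s parents. -/
def restr (A : Fin N → Type) (P : Fin N → Finset (Fin N)) (i : Fin N) (a : JointAct A) :
    ParAct A P i := fun j => a j.val

/-- The parent relation forms a DAG: it admits a topological order. -/
def IsDAG (P : Fin N → Finset (Fin N)) : Prop :=
  ∃ ord : Fin N → ℕ, ∀ i : Fin N, ∀ j ∈ P i, ord j < ord i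

/-- Joint policies: a map from states to (signed) weights on joint actions. -/
abbrev Pol (S : Type) (A : Fin N → Type) : Type := S → JointAct A → ℝ

/-- `π` is a probability distribution over joint actions in every state. -/
def IsPol (π : Pol S A) : Prop := (∀ s a, 0 ≤ π s a) ∧ ∀ s, ∑ a, π s a = 1

/-- The transition function is a probability kernel. -/
def IsKernel (Ptr : S → JointAct A → S → ℝ) : Prop :=
  (∀ s a s', 0 ≤ Ptr s a s') ∧ ∀ s a, ∑ s', Ptr s a s' = 1

/-- `μ` is a probability distribution over states. -/
def IsDist (μ : S → ℝ) : Prop := (∀ s, 0 ≤ μ s) ∧ ∑ s, μ s = 1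

/-- Distribution of the state at time `t`, starting from initial distribution `ν`
and following joint policy `π` in the Markov game with transitions `Ptr`. -/
noncomputable def visit (Ptr : S → JointAct A → S → ℝ) (π : Pol S A) (ν : S → ℝ) :
    ℕ → S → ℝ
  | 0 => ν
  | t + 1 => fun s' => ∑ s, ∑ a, visit Ptr π ν t s * π s a * Ptr s a s'

/-- Discounted value `V_π(ν)` of policy `π` started from initial state distribution `ν`. -/
noncomputable def Vval (γ : ℝ) (Ptr : S → JointAct A → S → ℝ) (r : S → JointAct A → ℝ)
    (π : Pol S A) (ν : S → ℝ) : ℝ :=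
  ∑' t : ℕ, γ ^ t * ∑ s, ∑ a, visit Ptr π ν t s * π s a * r s a

/-- State value function `V_π(s)`. -/
noncomputable def VS (γ : ℝ) (Ptr : S → JointAct A → S → ℝ) (r : S → JointAct A → ℝ)
    (π : Pol S A) (s : S) : ℝ :=
  Vval γ Ptr r π (fun s' => if s' = s then 1 else 0)

/-- Action value function `Q_π(s,a)`. -/
noncomputable def Qa (γ : ℝ) (Ptr : S → JointAct A → S → ℝ) (r : S → JointAct A → ℝ)
    (π : Pol S A) (s : S) (a : JointAct A) : ℝ :=
  r s a + γ * ∑ s', Ptr s a s' * VS γ Ptr r π s'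

/-- (Unnormalized) discounted state visitation measure `d_ν^π(s)`. -/
noncomputable def dvisit (γ : ℝ) (Ptr : S → JointAct A → S → ℝ) (π : Pol S A)
    (ν : S → ℝ) (s : S) : ℝ :=
  ∑' t : ℕ, γ ^ t * visit Ptr π ν t s

/-- Tabular softmax parameters for a Bayesian network policy. -/
abbrev Param (S : Type) (A : Fin N → Type) (P : Fin N → Finset (Fin N)) : Type :=
  (i : Fin N) → S → ParAct A P i → A i → ℝ

/-- Local softmax policy of agent `i`: `π^i_{θ^i}(a^i | s, a^{P^i}) ∝ exp θ^i_{s,a^{P^i},a^i}`. -/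
noncomputable def locPol (P : Fin N → Finset (Fin N)) (θ : Param S A P) (i : Fin N) (s : S)
    (p : ParAct A P i) (ai : A i) : ℝ :=
  Real.exp (θ i s p ai) / ∑ b, Real.exp (θ i s p b)

/-- BN joint policy induced by arbitrary local policies: `π(a|s) = ∏ i π^i(a^i|s,a^{P^i})`. -/
noncomputable def bnPolGen (P : Fin N → Finset (Fin N))
    (π : (i : Fin N) → S → ParAct A P i → A i → ℝ) : Pol S A :=
  fun s a => ∏ i, π i s (restr A P i a) (a i)

/-- Tabular softmax BN joint policy. -/
noncomputable def bnPol (P : Fin N → Finset (Fin N)) (θ : Param S A P) : Pol S A :=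
  bnPolGen P (fun i => locPol P θ i)

/-- Coordinate basis vector of the parameter space at coordinate `(i, s, p, ai)`. -/
noncomputable def basis (P : Fin N → Finset (Fin N)) (i : Fin N) (s : S) (p : ParAct A P i)
    (ai : A i) : Param S A P :=
  Pi.single i (fun s' p' a' => if s' = s ∧ p' = p ∧ a' = ai then 1 else 0)

/-- Partial derivative of `f` with respect to the parameter coordinate `(i, s, p, ai)`. -/
noncomputable def pderiv (P : Fin N → Finset (Fin N)) (f : Param S A P → ℝ)
    (θ : Param S A P) (i : Fin N) (s : S) (p : ParAct A P i) (ai : A i) : ℝ :=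
  deriv (fun τ : ℝ => f (θ + τ • basis P i s p ai)) 0

/-- The policy gradient `∇_θ V_{π_θ}(μ)`, coordinatewise. -/
noncomputable def gradV (γ : ℝ) (Ptr : S → JointAct A → S → ℝ) (r : S → JointAct A → ℝ)
    (μ : S → ℝ) (P : Fin N → Finset (Fin N)) (θ : Param S A P) : Param S A P :=
  fun i s p ai => pderiv P (fun θ' => Vval γ Ptr r (bnPol P θ') μ) θ i s p ai

/-- Marginal probability `π^{P^i}(a^{P^i} | s)` of parent action `p` under joint policy `π`. -/
noncomputable def parentMarg (P : Fin N → Finset (Fin N)) (π : Pol S A) (i : Fin N) (s : S)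
    (p : ParAct A P i) : ℝ :=
  ∑ a, if restr A P i a = p then π s a else 0

/-- Conditional action value `Q_π(s, a^{P^i}) = E_{a^{-P^i} ∼ π(·|s,a^{P^i})}[Q_π(s,a)]`. -/
noncomputable def Qpar (γ : ℝ) (Ptr : S → JointAct A → S → ℝ) (r : S → JointAct A → ℝ)
    (P : Fin N → Finset (Fin N)) (π : Pol S A) (i : Fin N) (s : S) (p : ParAct A P i) : ℝ :=
  (∑ a, if restr A P i a = p then π s a * Qa γ Ptr r π s a else 0) / parentMarg P π i s p

/-- Conditional action value `Q_π(s, a^{P^i_+}) = E_{a^{-P^i_+} ∼ π(·|s,a^{P^i},a^i)}[Q_π(s,a)]`. -/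
noncomputable def QparPlus (γ : ℝ) (Ptr : S → JointAct A → S → ℝ) (r : S → JointAct A → ℝ)
    (P : Fin N → Finset (Fin N)) (π : Pol S A) (i : Fin N) (s : S) (p : ParAct A P i)
    (ai : A i) : ℝ :=
  (∑ a, if restr A P i a = p ∧ a i = ai then π s a * Qa γ Ptr r π s a else 0) /
    (∑ a, if restr A P i a = p ∧ a i = ai then π s a else 0)

/-- Advantage `A^i_π(s, a^{P^i}, a^i) = Q_π(s,a^{P^i_+}) − Q_π(s,a^{P^i})`. -/
noncomputable def Adv (γ : ℝ) (Ptr : S → JointAct A → S → ℝ) (r : S → JointAct A → ℝ)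
    (P : Fin N → Finset (Fin N)) (π : Pol S A) (i : Fin N) (s : S) (p : ParAct A P i)
    (ai : A i) : ℝ :=
  QparPlus γ Ptr r P π i s p ai - Qpar γ Ptr r P π i s p

/-- Augmented state visitation `d_μ^π(s, a^{P^i}) = d_μ^π(s) ⬝ π^{P^i}(a^{P^i}|s)`. -/
noncomputable def dAug (γ : ℝ) (Ptr : S → JointAct A → S → ℝ) (P : Fin N → Finset (Fin N))
    (π : Pol S A) (μ : S → ℝ) (i : Fin N) (s : S) (p : ParAct A P i) : ℝ :=
  dvisit γ Ptr π μ s * parentMarg P π i s p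

/-- Centered advantage `Ā^{π_θ,i}(s,a) = Q(s,a) − E_{ā^i ∼ π^i(·|s,a^{P^i})} Q(s,ā^i,a^{-i})`. -/
noncomputable def Abar (γ : ℝ) (Ptr : S → JointAct A → S → ℝ) (r : S → JointAct A → ℝ)
    (P : Fin N → Finset (Fin N)) (θ : Param S A P) (i : Fin N) (s : S) (a : JointAct A) : ℝ :=
  Qa γ Ptr r (bnPol P θ) s a -
    ∑ b : A i, locPol P θ i s (restr A P i a) b *
      Qa γ Ptr r (bnPol P θ) s (Function.update a i b)

/-- `Δ`: the minimal nonzero magnitude of the limiting advantages. -/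
noncomputable def Delta (P : Fin N → Finset (Fin N))
    (QplusInf : (i : Fin N) → S → ParAct A P i → A i → ℝ)
    (QmInf : (i : Fin N) → S → ParAct A P i → ℝ) : ℝ :=
  sInf {x : ℝ | ∃ (i : Fin N) (s : S) (p : ParAct A P i) (ai : A i),
    QplusInf i s p ai - QmInf i s p ≠ 0 ∧ x = |QplusInf i s p ai - QmInf i s p|}

section Smooth
set_option linter.unusedSectionVars false
set_option linter.unusedVariables false

variable (P : Fin N → Finset (Fin N))

/-- Sum of exponentials of local parameters. -/
noncomputable def zsum (θ : Param S A P) (i : Fin N) (s : S) (p : ParAct A P i) : ℝ :=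
  ∑ b, Real.exp (θ i s p b)

lemma zsum_pos (θ : Param S A P) (i : Fin N) (s : S) (p : ParAct A P i) :
    0 < zsum P θ i s p :=
  Finset.sum_pos (fun b _ => Real.exp_pos _) Finset.univ_nonempty

lemma locPol_pos (θ : Param S A P) (i : Fin N) (s : S) (p : ParAct A P i) (b : A i) :
    0 < locPol P θ i s p b :=
  div_pos (Real.exp_pos _) (zsum_pos P θ i s p)

lemma locPol_nonneg (θ : Param S A P) (i : Fin N) (s : S) (p : ParAct A P i) (b : A i) :
    0 ≤ locPol P θ i s p b := (locPol_pos P θ i s p b).le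

lemma locPol_sum (θ : Param S A P) (i : Fin N) (s : S) (p : ParAct A P i) :
    ∑ b, locPol P θ i s p b = 1 := by
  unfold locPol
  rw [← Finset.sum_div]
  exact div_self (zsum_pos P θ i s p).ne'

lemma locPol_le_one (θ : Param S A P) (i : Fin N) (s : S) (p : ParAct A P i) (b : A i) :
    locPol P θ i s p b ≤ 1 := by
  have h := locPol_sum P θ i s p
  have : locPol P θ i s p b ≤ ∑ c, locPol P θ i s p c :=
    Finset.single_le_sum (fun c _ => locPol_nonneg P θ i s p c) (Finset.mem_univ b)
  linarith

/-- Directional derivative of the local softmax policy in direction `w`. -/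
noncomputable def dloc (θ w : Param S A P) (i : Fin N) (s : S) (p : ParAct A P i)
    (b : A i) : ℝ :=
  locPol P θ i s p b * (w i s p b - ∑ c, locPol P θ i s p c * w i s p c)

/-- Second (mixed) directional derivative of the local softmax policy. -/
noncomputable def ddloc (θ w v : Param S A P) (i : Fin N) (s : S) (p : ParAct A P i)
    (b : A i) : ℝ :=
  dloc P θ w i s p b * (v i s p b - ∑ c, locPol P θ i s p c * v i s p c)
    - locPol P θ i s p b * (∑ c, dloc P θ w i s p c * v i s p c)

lemma param_path_apply (θ w : Param S A P) (τ : ℝ) (i : Fin N) (s : S) (p : ParAct A P i)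
    (b : A i) : (θ + τ • w) i s p b = θ i s p b + τ * w i s p b := rfl

lemma hasDerivAt_exp_path (θ w : Param S A P) (i : Fin N) (s : S) (p : ParAct A P i)
    (b : A i) (τ₀ : ℝ) :
    HasDerivAt (fun τ => Real.exp ((θ + τ • w) i s p b))
      (w i s p b * Real.exp ((θ + τ₀ • w) i s p b)) τ₀ := by
  simp only [param_path_apply]
  have h : HasDerivAt (fun τ : ℝ => θ i s p b + τ * w i s p b) (w i s p b) τ₀ := by
    simpa using ((hasDerivAt_id τ₀).mul_const (w i s p b)).const_add (θ i s p b)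
  simpa [mul_comm] using h.exp

lemma hasDerivAt_locPol (θ w : Param S A P) (i : Fin N) (s : S) (p : ParAct A P i)
    (b : A i) (τ₀ : ℝ) :
    HasDerivAt (fun τ => locPol P (θ + τ • w) i s p b)
      (dloc P (θ + τ₀ • w) w i s p b) τ₀ := by
  have hZ : HasDerivAt (fun τ => zsum P (θ + τ • w) i s p)
      (∑ c, w i s p c * Real.exp ((θ + τ₀ • w) i s p c)) τ₀ := by
    exact HasDerivAt.fun_sum (fun c _ => hasDerivAt_exp_path P θ w i s p c τ₀)
  have hE := hasDerivAt_exp_path P θ w i s p b τ₀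
  have hdiv := hE.div hZ (zsum_pos P (θ + τ₀ • w) i s p).ne'
  have hfun : (fun τ : ℝ => locPol P (θ + τ • w) i s p b)
      = fun τ : ℝ => Real.exp ((θ + τ • w) i s p b) / zsum P (θ + τ • w) i s p := rfl
  rw [hfun]
  refine hdiv.congr_deriv ?_
  have hZpos := zsum_pos P (θ + τ₀ • w) i s p
  unfold dloc
  have h1 : ∑ c, locPol P (θ + τ₀ • w) i s p c * w i s p c
      = (∑ c, w i s p c * Real.exp ((θ + τ₀ • w) i s p c)) / zsum P (θ + τ₀ • w) i s p := by
    rw [Finset.sum_div]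
    refine Finset.sum_congr rfl fun c _ => ?_
    show Real.exp ((θ + τ₀ • w) i s p c) / zsum P (θ + τ₀ • w) i s p * w i s p c = _
    ring
  have h2 : locPol P (θ + τ₀ • w) i s p b
      = Real.exp ((θ + τ₀ • w) i s p b) / zsum P (θ + τ₀ • w) i s p := rfl
  rw [h1, h2]
  field_simp

lemma hasDerivAt_dloc (θ w v : Param S A P) (i : Fin N) (s : S) (p : ParAct A P i)
    (b : A i) (τ₀ : ℝ) :
    HasDerivAt (fun τ => dloc P (θ + τ • w) v i s p b)
      (ddloc P (θ + τ₀ • w) w v i s p b) τ₀ := by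
  have h1 := hasDerivAt_locPol P θ w i s p b τ₀
  have h2 : HasDerivAt (fun τ => v i s p b - ∑ c, locPol P (θ + τ • w) i s p c * v i s p c)
      (-(∑ c, dloc P (θ + τ₀ • w) w i s p c * v i s p c)) τ₀ := by
    have := HasDerivAt.fun_sum (u := Finset.univ)
      (fun c _ => (hasDerivAt_locPol P θ w i s p c τ₀).mul_const (v i s p c))
    simpa using (this.const_sub (v i s p b))
  have := h1.mul h2
  refine this.congr_deriv ?_
  unfold ddloc
  ring

end Smooth
section Smooth2
set_option linter.unusedSectionVars false
set_option linter.unusedVariables false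
set_option maxHeartbeats 1000000

variable (P : Fin N → Finset (Fin N))

lemma abs_dloc_le (θ w : Param S A P) (Mw : Fin N → ℝ)
    (hMw : ∀ i s p b, |w i s p b| ≤ Mw i)
    (i : Fin N) (s : S) (p : ParAct A P i) (b : A i) :
    |dloc P θ w i s p b| ≤ 2 * Mw i * locPol P θ i s p b := by
  unfold dloc
  rw [abs_mul, abs_of_nonneg (locPol_nonneg P θ i s p b)]
  have h2 : |∑ c, locPol P θ i s p c * w i s p c| ≤ Mw i := by
    calc |∑ c, locPol P θ i s p c * w i s p c| ≤ ∑ c, |locPol P θ i s p c * w i s p c| :=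
          Finset.abs_sum_le_sum_abs _ _
      _ ≤ ∑ c, locPol P θ i s p c * Mw i := by
          refine Finset.sum_le_sum fun c _ => ?_
          rw [abs_mul, abs_of_nonneg (locPol_nonneg P θ i s p c)]
          exact mul_le_mul_of_nonneg_left (hMw i s p c) (locPol_nonneg P θ i s p c)
      _ = Mw i := by rw [← Finset.sum_mul, locPol_sum P θ i s p, one_mul]
  have h1 : |w i s p b - ∑ c, locPol P θ i s p c * w i s p c| ≤ 2 * Mw i := by
    calc |w i s p b - ∑ c, locPol P θ i s p c * w i s p c|
        ≤ |w i s p b| + |∑ c, locPol P θ i s p c * w i s p c| := abs_sub _ _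
      _ ≤ Mw i + Mw i := add_le_add (hMw i s p b) h2
      _ = 2 * Mw i := by ring
  calc locPol P θ i s p b * |w i s p b - ∑ c, locPol P θ i s p c * w i s p c|
      ≤ locPol P θ i s p b * (2 * Mw i) :=
        mul_le_mul_of_nonneg_left h1 (locPol_nonneg P θ i s p b)
    _ = 2 * Mw i * locPol P θ i s p b := by ring

lemma abs_ddloc_le (θ w v : Param S A P) (Mw Mv : Fin N → ℝ)
    (hMw : ∀ i s p b, |w i s p b| ≤ Mw i) (hMv : ∀ i s p b, |v i s p b| ≤ Mv i)
    (hMw0 : ∀ i, 0 ≤ Mw i) (hMv0 : ∀ i, 0 ≤ Mv i)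
    (i : Fin N) (s : S) (p : ParAct A P i) (b : A i) :
    |ddloc P θ w v i s p b| ≤ 6 * Mw i * Mv i * locPol P θ i s p b := by
  unfold ddloc
  have habs2 : |∑ c, locPol P θ i s p c * v i s p c| ≤ Mv i := by
    calc |∑ c, locPol P θ i s p c * v i s p c| ≤ ∑ c, |locPol P θ i s p c * v i s p c| :=
          Finset.abs_sum_le_sum_abs _ _
      _ ≤ ∑ c, locPol P θ i s p c * Mv i := by
          refine Finset.sum_le_sum fun c _ => ?_
          rw [abs_mul, abs_of_nonneg (locPol_nonneg P θ i s p c)]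
          exact mul_le_mul_of_nonneg_left (hMv i s p c) (locPol_nonneg P θ i s p c)
      _ = Mv i := by rw [← Finset.sum_mul, locPol_sum P θ i s p, one_mul]
  have h1 : |dloc P θ w i s p b * (v i s p b - ∑ c, locPol P θ i s p c * v i s p c)|
      ≤ 4 * Mw i * Mv i * locPol P θ i s p b := by
    rw [abs_mul]
    have ha := abs_dloc_le P θ w Mw hMw i s p b
    have hb : |v i s p b - ∑ c, locPol P θ i s p c * v i s p c| ≤ 2 * Mv i :=
      calc |v i s p b - ∑ c, locPol P θ i s p c * v i s p c|
          ≤ |v i s p b| + |∑ c, locPol P θ i s p c * v i s p c| := abs_sub _ _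
        _ ≤ Mv i + Mv i := add_le_add (hMv i s p b) habs2
        _ = 2 * Mv i := by ring
    calc |dloc P θ w i s p b| * |v i s p b - ∑ c, locPol P θ i s p c * v i s p c|
        ≤ (2 * Mw i * locPol P θ i s p b) * (2 * Mv i) := by
          exact mul_le_mul ha hb (abs_nonneg _)
            (mul_nonneg (mul_nonneg (by norm_num) (hMw0 i)) (locPol_nonneg P θ i s p b))
      _ = 4 * Mw i * Mv i * locPol P θ i s p b := by ring
  have h2 : |locPol P θ i s p b * ∑ c, dloc P θ w i s p c * v i s p c|
      ≤ 2 * Mw i * Mv i * locPol P θ i s p b := by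
    rw [abs_mul, abs_of_nonneg (locPol_nonneg P θ i s p b)]
    have hs : |∑ c, dloc P θ w i s p c * v i s p c| ≤ 2 * Mw i * Mv i := by
      calc |∑ c, dloc P θ w i s p c * v i s p c| ≤ ∑ c, |dloc P θ w i s p c * v i s p c| :=
            Finset.abs_sum_le_sum_abs _ _
        _ ≤ ∑ c, (2 * Mw i * locPol P θ i s p c) * Mv i := by
            refine Finset.sum_le_sum fun c _ => ?_
            rw [abs_mul]
            exact mul_le_mul (abs_dloc_le P θ w Mw hMw i s p c) (hMv i s p c) (abs_nonneg _)
              (mul_nonneg (mul_nonneg (by norm_num) (hMw0 i)) (locPol_nonneg P θ i s p c))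
        _ = 2 * Mw i * Mv i := by
            rw [← Finset.sum_mul, ← Finset.mul_sum, locPol_sum P θ i s p]; ring
    calc locPol P θ i s p b * |∑ c, dloc P θ w i s p c * v i s p c|
        ≤ locPol P θ i s p b * (2 * Mw i * Mv i) :=
          mul_le_mul_of_nonneg_left hs (locPol_nonneg P θ i s p b)
      _ = 2 * Mw i * Mv i * locPol P θ i s p b := by ring
  calc |dloc P θ w i s p b * (v i s p b - ∑ c, locPol P θ i s p c * v i s p c)
        - locPol P θ i s p b * ∑ c, dloc P θ w i s p c * v i s p c|
      ≤ |dloc P θ w i s p b * (v i s p b - ∑ c, locPol P θ i s p c * v i s p c)|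
        + |locPol P θ i s p b * ∑ c, dloc P θ w i s p c * v i s p c| := abs_sub _ _
    _ ≤ 4 * Mw i * Mv i * locPol P θ i s p b + 2 * Mw i * Mv i * locPol P θ i s p b :=
        add_le_add h1 h2
    _ = 6 * Mw i * Mv i * locPol P θ i s p b := by ring

/-- Splitting a sum over joint actions at one coordinate. -/
lemma sum_pi_split (i : Fin N) (g : JointAct A → ℝ) :
    ∑ a : JointAct A, g a
      = ∑ b : A i, ∑ c : ((j : {j // j ≠ i}) → A j.val),
          g ((Equiv.piSplitAt i A).symm (b, c)) := by
  rw [← Equiv.sum_comp (Equiv.piSplitAt i A).symm g, Fintype.sum_prod_type]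

lemma piSplitAt_symm_self (i : Fin N) (b : A i) (c : (j : {j // j ≠ i}) → A j.val) :
    (Equiv.piSplitAt i A).symm (b, c) i = b := by
  simp [Equiv.piSplitAt]

lemma piSplitAt_symm_ne (i : Fin N) (b : A i) (c : (j : {j // j ≠ i}) → A j.val)
    (j : Fin N) (h : j ≠ i) :
    (Equiv.piSplitAt i A).symm (b, c) j = c ⟨j, h⟩ := by
  simp [Equiv.piSplitAt, h]

end Smooth2
section Smooth3
set_option linter.unusedSectionVars false
set_option linter.unusedVariables false
set_option maxHeartbeats 1000000

variable (P : Fin N → Finset (Fin N))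

lemma bnPolGen_partial_sum (hDAG : IsDAG P)
    (f : (i : Fin N) → S → ParAct A P i → A i → ℝ)
    (hf : ∀ i s p, ∑ b, f i s p b = 1) (s : S) (R : Finset (Fin N)) :
    ∑ a : JointAct A, ∏ i ∈ R, f i s (restr A P i a) (a i)
      = ∏ i ∈ Rᶜ, (Fintype.card (A i) : ℝ) := by
  obtain ⟨ord, hord⟩ := hDAG
  induction R using Finset.strongInduction with
  | _ R ih =>
  rcases R.eq_empty_or_nonempty with rfl | hR
  · rw [Finset.compl_empty]
    simp only [Finset.prod_empty]
    rw [Finset.sum_const, Finset.card_univ, nsmul_eq_mul, mul_one, Fintype.card_pi]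
    rw [Nat.cast_prod]
  · obtain ⟨i₀, hi₀R, hmax⟩ := R.exists_max_image ord hR
    set e := Equiv.piSplitAt i₀ A with he
    -- coordinates other than i₀ don't involve i₀ (neither as index nor parent)
    have hnopar : ∀ j ∈ R, i₀ ∉ P j := by
      intro j hj hpar
      exact absurd (hord j i₀ hpar) (not_lt.2 (hmax j hj))
    have hfact : ∀ (j : Fin N), j ∈ R.erase i₀ → ∀ (b b' : A i₀)
        (c : (k : {k // k ≠ i₀}) → A k.val),
        f j s (restr A P j (e.symm (b, c))) (e.symm (b, c) j)
          = f j s (restr A P j (e.symm (b', c))) (e.symm (b', c) j) := by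
      intro j hj b b' c
      have hji : j ≠ i₀ := Finset.ne_of_mem_erase hj
      have hjR : j ∈ R := Finset.mem_of_mem_erase hj
      have hrestr : restr A P j (e.symm (b, c)) = restr A P j (e.symm (b', c)) := by
        funext k
        have hk : (k.val : Fin N) ≠ i₀ := by
          intro hcon
          have hp : (k.val : Fin N) ∈ P j := k.property
          rw [hcon] at hp
          exact hnopar j hjR hp
        show e.symm (b, c) k.val = e.symm (b', c) k.val
        rw [piSplitAt_symm_ne i₀ b c k.val hk, piSplitAt_symm_ne i₀ b' c k.val hk]
      rw [hrestr, piSplitAt_symm_ne i₀ b c j hji, piSplitAt_symm_ne i₀ b' c j hji]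
    have hrestr0 : ∀ (b b' : A i₀) (c : (k : {k // k ≠ i₀}) → A k.val),
        restr A P i₀ (e.symm (b, c)) = restr A P i₀ (e.symm (b', c)) := by
      intro b b' c
      funext k
      have hk : (k.val : Fin N) ≠ i₀ := by
        intro hcon
        have hp : (k.val : Fin N) ∈ P i₀ := k.property
        rw [hcon] at hp
        exact absurd (hord i₀ i₀ hp) (lt_irrefl _)
      show e.symm (b, c) k.val = e.symm (b', c) k.val
      rw [piSplitAt_symm_ne i₀ b c k.val hk, piSplitAt_symm_ne i₀ b' c k.val hk]
    obtain ⟨b₀⟩ : Nonempty (A i₀) := inferInstance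
    -- the split computation for the set R
    have key : ∑ a : JointAct A, ∏ i ∈ R, f i s (restr A P i a) (a i)
        = ∑ c : (k : {k // k ≠ i₀}) → A k.val,
            ∏ j ∈ R.erase i₀, f j s (restr A P j (e.symm (b₀, c))) (e.symm (b₀, c) j) := by
      rw [sum_pi_split i₀]
      rw [Finset.sum_comm]
      refine Finset.sum_congr rfl fun c _ => ?_
      have hsplit : ∀ b : A i₀,
          ∏ i ∈ R, f i s (restr A P i (e.symm (b, c))) (e.symm (b, c) i)
            = f i₀ s (restr A P i₀ (e.symm (b₀, c))) b
              * ∏ j ∈ R.erase i₀, f j s (restr A P j (e.symm (b₀, c))) (e.symm (b₀, c) j) := by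
        intro b
        rw [← Finset.mul_prod_erase _ _ hi₀R]
        congr 1
        · rw [piSplitAt_symm_self, hrestr0 b b₀ c]
        · exact Finset.prod_congr rfl fun j hj => hfact j hj b b₀ c
      rw [Finset.sum_congr rfl fun b _ => hsplit b, ← Finset.sum_mul, hf i₀ s _, one_mul]
    -- the split computation for the set R.erase i₀
    have key2 : ∑ a : JointAct A, ∏ i ∈ R.erase i₀, f i s (restr A P i a) (a i)
        = (Fintype.card (A i₀) : ℝ) * ∑ c : (k : {k // k ≠ i₀}) → A k.val,
            ∏ j ∈ R.erase i₀, f j s (restr A P j (e.symm (b₀, c))) (e.symm (b₀, c) j) := by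
      rw [sum_pi_split i₀, Finset.sum_comm]
      rw [Finset.sum_congr rfl fun c (_ : c ∈ Finset.univ) => Finset.sum_congr rfl
        fun b _ => Finset.prod_congr rfl fun j hj => hfact j hj b b₀ c]
      simp only [Finset.sum_const, Finset.card_univ, nsmul_eq_mul]
      rw [← Finset.mul_sum]
    have hcard : (0:ℝ) < (Fintype.card (A i₀) : ℝ) := by
      exact_mod_cast Fintype.card_pos
    have hih := ih (R.erase i₀) (Finset.erase_ssubset hi₀R)
    rw [key2] at hih
    have hcompl : ((R.erase i₀)ᶜ : Finset (Fin N)) = insert i₀ Rᶜ := Finset.compl_erase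
    rw [hcompl, Finset.prod_insert (by simp [hi₀R])] at hih
    rw [key]
    have := mul_left_cancel₀ hcard.ne' hih
    exact this

lemma bnPol_sum_one (hDAG : IsDAG P) (θ : Param S A P) (s : S) :
    ∑ a, bnPol P θ s a = 1 := by
  have h := bnPolGen_partial_sum P hDAG (fun i => locPol P θ i)
    (fun i s p => locPol_sum P θ i s p) s Finset.univ
  rw [Finset.compl_univ, Finset.prod_empty] at h
  simpa [bnPol, bnPolGen] using h

lemma bnPol_nonneg (θ : Param S A P) (s : S) (a : JointAct A) : 0 ≤ bnPol P θ s a := by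
  unfold bnPol bnPolGen
  exact Finset.prod_nonneg fun i _ => locPol_nonneg P θ i s _ _

end Smooth3
section Smooth4
set_option linter.unusedSectionVars false
set_option linter.unusedVariables false
set_option maxHeartbeats 1000000

variable (P : Fin N → Finset (Fin N))

/-- Directional derivative of the BN joint policy. -/
noncomputable def dpol (θ w : Param S A P) (s : S) (a : JointAct A) : ℝ :=
  ∑ i, (∏ j ∈ Finset.univ.erase i, locPol P θ j s (restr A P j a) (a j))
    * dloc P θ w i s (restr A P i a) (a i)

/-- Mixed second directional derivative of the BN joint policy. -/
noncomputable def ddpol (θ w v : Param S A P) (s : S) (a : JointAct A) : ℝ :=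
  ∑ i, ((∑ i' ∈ (Finset.univ.erase i),
        (∏ j ∈ (Finset.univ.erase i).erase i', locPol P θ j s (restr A P j a) (a j))
          * dloc P θ w i' s (restr A P i' a) (a i'))
      * dloc P θ v i s (restr A P i a) (a i)
    + (∏ j ∈ Finset.univ.erase i, locPol P θ j s (restr A P j a) (a j))
      * ddloc P θ w v i s (restr A P i a) (a i))

lemma hasDerivAt_bnPol (θ w : Param S A P) (s : S) (a : JointAct A) (τ₀ : ℝ) :
    HasDerivAt (fun τ => bnPol P (θ + τ • w) s a) (dpol P (θ + τ₀ • w) w s a) τ₀ := by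
  have h := HasDerivAt.fun_finsetProd (x := τ₀) (u := Finset.univ)
    (f := fun i τ => locPol P (θ + τ • w) i s (restr A P i a) (a i))
    (f' := fun i => dloc P (θ + τ₀ • w) w i s (restr A P i a) (a i))
    (fun i _ => hasDerivAt_locPol P θ w i s _ _ τ₀)
  simp only [smul_eq_mul] at h
  exact h

lemma hasDerivAt_dpol (θ w v : Param S A P) (s : S) (a : JointAct A) (τ₀ : ℝ) :
    HasDerivAt (fun τ => dpol P (θ + τ • w) v s a) (ddpol P (θ + τ₀ • w) w v s a) τ₀ := by
  unfold dpol ddpol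
  refine HasDerivAt.fun_sum fun i _ => ?_
  have hprod := HasDerivAt.fun_finsetProd (x := τ₀) (u := Finset.univ.erase i)
    (f := fun j τ => locPol P (θ + τ • w) j s (restr A P j a) (a j))
    (f' := fun j => dloc P (θ + τ₀ • w) w j s (restr A P j a) (a j))
    (fun j _ => hasDerivAt_locPol P θ w j s _ _ τ₀)
  have hd := hasDerivAt_dloc P θ w v i s (restr A P i a) (a i) τ₀
  have := hprod.mul hd
  simp only [smul_eq_mul] at this
  exact this

lemma param_path_zero (θ w : Param S A P) : θ + (0:ℝ) • w = θ := by
  simp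

lemma sum_dpol_zero (hDAG : IsDAG P) (θ w : Param S A P) (s : S) :
    ∑ a, dpol P θ w s a = 0 := by
  have h1 : HasDerivAt (fun τ : ℝ => ∑ a, bnPol P (θ + τ • w) s a)
      (∑ a, dpol P (θ + (0:ℝ) • w) w s a) (0:ℝ) :=
    HasDerivAt.fun_sum fun a _ => hasDerivAt_bnPol P θ w s a 0
  have h2 : (fun τ : ℝ => ∑ a, bnPol P (θ + τ • w) s a) = fun _ => (1:ℝ) := by
    funext τ
    exact bnPol_sum_one P hDAG (θ + τ • w) s
  rw [h2] at h1
  have h3 : HasDerivAt (fun _ : ℝ => (1:ℝ)) 0 0 := hasDerivAt_const 0 1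
  have := h1.unique h3
  rwa [param_path_zero] at this

lemma sum_ddpol_zero (hDAG : IsDAG P) (θ w v : Param S A P) (s : S) :
    ∑ a, ddpol P θ w v s a = 0 := by
  have h1 : HasDerivAt (fun τ : ℝ => ∑ a, dpol P (θ + τ • w) v s a)
      (∑ a, ddpol P (θ + (0:ℝ) • w) w v s a) (0:ℝ) :=
    HasDerivAt.fun_sum fun a _ => hasDerivAt_dpol P θ w v s a 0
  have h2 : (fun τ : ℝ => ∑ a, dpol P (θ + τ • w) v s a) = fun _ => (0:ℝ) := by
    funext τ
    exact sum_dpol_zero P hDAG (θ + τ • w) v s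
  rw [h2] at h1
  have h3 : HasDerivAt (fun _ : ℝ => (0:ℝ)) 0 0 := hasDerivAt_const 0 0
  have := h1.unique h3
  rwa [param_path_zero] at this

lemma abs_dpol_le (θ w : Param S A P) (Mw : Fin N → ℝ)
    (hMw : ∀ i s p b, |w i s p b| ≤ Mw i) (hMw0 : ∀ i, 0 ≤ Mw i)
    (s : S) (a : JointAct A) :
    |dpol P θ w s a| ≤ (2 * ∑ i, Mw i) * bnPol P θ s a := by
  unfold dpol
  calc |∑ i, (∏ j ∈ Finset.univ.erase i, locPol P θ j s (restr A P j a) (a j))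
        * dloc P θ w i s (restr A P i a) (a i)|
      ≤ ∑ i, |(∏ j ∈ Finset.univ.erase i, locPol P θ j s (restr A P j a) (a j))
        * dloc P θ w i s (restr A P i a) (a i)| := Finset.abs_sum_le_sum_abs _ _
    _ ≤ ∑ i, 2 * Mw i * bnPol P θ s a := by
        refine Finset.sum_le_sum fun i _ => ?_
        rw [abs_mul, abs_of_nonneg (Finset.prod_nonneg fun j _ => locPol_nonneg P θ j s _ _)]
        calc (∏ j ∈ Finset.univ.erase i, locPol P θ j s (restr A P j a) (a j))
              * |dloc P θ w i s (restr A P i a) (a i)|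
            ≤ (∏ j ∈ Finset.univ.erase i, locPol P θ j s (restr A P j a) (a j))
              * (2 * Mw i * locPol P θ i s (restr A P i a) (a i)) :=
              mul_le_mul_of_nonneg_left (abs_dloc_le P θ w Mw hMw i s _ _)
                (Finset.prod_nonneg fun j _ => locPol_nonneg P θ j s _ _)
          _ = 2 * Mw i * bnPol P θ s a := by
              rw [show bnPol P θ s a
                  = ∏ j, locPol P θ j s (restr A P j a) (a j) from rfl]
              rw [← Finset.prod_erase_mul Finset.univ _ (Finset.mem_univ i)]
              ring
    _ = (2 * ∑ i, Mw i) * bnPol P θ s a := by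
        rw [← Finset.sum_mul, Finset.mul_sum]

lemma sum_abs_dpol_le (hDAG : IsDAG P) (θ w : Param S A P) (Mw : Fin N → ℝ)
    (hMw : ∀ i s p b, |w i s p b| ≤ Mw i) (hMw0 : ∀ i, 0 ≤ Mw i) (s : S) :
    ∑ a, |dpol P θ w s a| ≤ 2 * ∑ i, Mw i := by
  calc ∑ a, |dpol P θ w s a| ≤ ∑ a, (2 * ∑ i, Mw i) * bnPol P θ s a :=
        Finset.sum_le_sum fun a _ => abs_dpol_le P θ w Mw hMw hMw0 s a
    _ = 2 * ∑ i, Mw i := by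
        rw [← Finset.mul_sum, bnPol_sum_one P hDAG θ s, mul_one]

lemma abs_ddpol_le (θ w v : Param S A P) (Mw Mv : Fin N → ℝ)
    (hMw : ∀ i s p b, |w i s p b| ≤ Mw i) (hMv : ∀ i s p b, |v i s p b| ≤ Mv i)
    (hMw0 : ∀ i, 0 ≤ Mw i) (hMv0 : ∀ i, 0 ≤ Mv i)
    (s : S) (a : JointAct A) :
    |ddpol P θ w v s a| ≤
      (∑ i, ((∑ i' ∈ Finset.univ.erase i, 4 * Mw i' * Mv i) + 6 * Mw i * Mv i))
        * bnPol P θ s a := by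
  unfold ddpol
  have hpol : ∀ i, (∏ j ∈ Finset.univ.erase i, locPol P θ j s (restr A P j a) (a j))
      * locPol P θ i s (restr A P i a) (a i) = bnPol P θ s a := fun i => by
    rw [show bnPol P θ s a = ∏ j, locPol P θ j s (restr A P j a) (a j) from rfl]
    exact Finset.prod_erase_mul Finset.univ _ (Finset.mem_univ i)
  have hpol2 : ∀ i i', i' ∈ Finset.univ.erase i →
      ((∏ j ∈ (Finset.univ.erase i).erase i', locPol P θ j s (restr A P j a) (a j))
        * locPol P θ i' s (restr A P i' a) (a i'))
      = ∏ j ∈ Finset.univ.erase i, locPol P θ j s (restr A P j a) (a j) := fun i i' h =>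
    Finset.prod_erase_mul _ _ h
  calc |∑ i, _| ≤ ∑ i, |((∑ i' ∈ (Finset.univ.erase i),
        (∏ j ∈ (Finset.univ.erase i).erase i', locPol P θ j s (restr A P j a) (a j))
          * dloc P θ w i' s (restr A P i' a) (a i'))
      * dloc P θ v i s (restr A P i a) (a i)
    + (∏ j ∈ Finset.univ.erase i, locPol P θ j s (restr A P j a) (a j))
      * ddloc P θ w v i s (restr A P i a) (a i))| := Finset.abs_sum_le_sum_abs _ _
    _ ≤ ∑ i, ((∑ i' ∈ Finset.univ.erase i, 4 * Mw i' * Mv i) + 6 * Mw i * Mv i)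
          * bnPol P θ s a := by
        refine Finset.sum_le_sum fun i _ => ?_
        have hA : |(∑ i' ∈ (Finset.univ.erase i),
            (∏ j ∈ (Finset.univ.erase i).erase i', locPol P θ j s (restr A P j a) (a j))
              * dloc P θ w i' s (restr A P i' a) (a i'))
            * dloc P θ v i s (restr A P i a) (a i)|
            ≤ (∑ i' ∈ Finset.univ.erase i, 4 * Mw i' * Mv i) * bnPol P θ s a := by
          rw [abs_mul]
          have h1 : |∑ i' ∈ (Finset.univ.erase i),
              (∏ j ∈ (Finset.univ.erase i).erase i', locPol P θ j s (restr A P j a) (a j))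
                * dloc P θ w i' s (restr A P i' a) (a i')|
              ≤ ∑ i' ∈ Finset.univ.erase i, 2 * Mw i' *
                  (∏ j ∈ Finset.univ.erase i, locPol P θ j s (restr A P j a) (a j)) := by
            refine (Finset.abs_sum_le_sum_abs _ _).trans (Finset.sum_le_sum fun i' hi' => ?_)
            rw [abs_mul, abs_of_nonneg (Finset.prod_nonneg fun j _ => locPol_nonneg P θ j s _ _)]
            calc (∏ j ∈ (Finset.univ.erase i).erase i', locPol P θ j s (restr A P j a) (a j))
                  * |dloc P θ w i' s (restr A P i' a) (a i')|
                ≤ (∏ j ∈ (Finset.univ.erase i).erase i', locPol P θ j s (restr A P j a) (a j))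
                  * (2 * Mw i' * locPol P θ i' s (restr A P i' a) (a i')) :=
                  mul_le_mul_of_nonneg_left (abs_dloc_le P θ w Mw hMw i' s _ _)
                    (Finset.prod_nonneg fun j _ => locPol_nonneg P θ j s _ _)
              _ = 2 * Mw i' *
                  (∏ j ∈ Finset.univ.erase i, locPol P θ j s (restr A P j a) (a j)) := by
                  rw [← hpol2 i i' hi']
                  ring
          have h2 : |dloc P θ v i s (restr A P i a) (a i)|
              ≤ 2 * Mv i * locPol P θ i s (restr A P i a) (a i) :=
            abs_dloc_le P θ v Mv hMv i s _ _
          calc |∑ i' ∈ (Finset.univ.erase i), _ * dloc P θ w i' s (restr A P i' a) (a i')|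
                * |dloc P θ v i s (restr A P i a) (a i)|
              ≤ (∑ i' ∈ Finset.univ.erase i, 2 * Mw i' *
                  (∏ j ∈ Finset.univ.erase i, locPol P θ j s (restr A P j a) (a j)))
                * (2 * Mv i * locPol P θ i s (restr A P i a) (a i)) := by
                refine mul_le_mul h1 h2 (abs_nonneg _) ?_
                refine Finset.sum_nonneg fun i' _ => ?_
                exact mul_nonneg (mul_nonneg (by norm_num) (hMw0 i'))
                  (Finset.prod_nonneg fun j _ => locPol_nonneg P θ j s _ _)
            _ = (∑ i' ∈ Finset.univ.erase i, 4 * Mw i' * Mv i) * bnPol P θ s a := by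
                rw [Finset.sum_mul, Finset.sum_mul]
                refine Finset.sum_congr rfl fun i' _ => ?_
                rw [← hpol i]
                ring
        have hB : |(∏ j ∈ Finset.univ.erase i, locPol P θ j s (restr A P j a) (a j))
            * ddloc P θ w v i s (restr A P i a) (a i)|
            ≤ 6 * Mw i * Mv i * bnPol P θ s a := by
          rw [abs_mul, abs_of_nonneg (Finset.prod_nonneg fun j _ => locPol_nonneg P θ j s _ _)]
          calc (∏ j ∈ Finset.univ.erase i, locPol P θ j s (restr A P j a) (a j))
                * |ddloc P θ w v i s (restr A P i a) (a i)|
              ≤ (∏ j ∈ Finset.univ.erase i, locPol P θ j s (restr A P j a) (a j))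
                * (6 * Mw i * Mv i * locPol P θ i s (restr A P i a) (a i)) :=
                mul_le_mul_of_nonneg_left (abs_ddloc_le P θ w v Mw Mv hMw hMv hMw0 hMv0 i s _ _)
                  (Finset.prod_nonneg fun j _ => locPol_nonneg P θ j s _ _)
            _ = 6 * Mw i * Mv i * bnPol P θ s a := by rw [← hpol i]; ring
        calc |_ + _| ≤ _ := abs_add_le _ _
          _ ≤ (∑ i' ∈ Finset.univ.erase i, 4 * Mw i' * Mv i) * bnPol P θ s a
              + 6 * Mw i * Mv i * bnPol P θ s a := add_le_add hA hB
          _ = ((∑ i' ∈ Finset.univ.erase i, 4 * Mw i' * Mv i) + 6 * Mw i * Mv i)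
              * bnPol P θ s a := by ring
    _ = (∑ i, ((∑ i' ∈ Finset.univ.erase i, 4 * Mw i' * Mv i) + 6 * Mw i * Mv i))
        * bnPol P θ s a := by rw [Finset.sum_mul]

lemma sum_abs_ddpol_le (hDAG : IsDAG P) (θ w v : Param S A P) (Mw Mv : Fin N → ℝ)
    (hMw : ∀ i s p b, |w i s p b| ≤ Mw i) (hMv : ∀ i s p b, |v i s p b| ≤ Mv i)
    (hMw0 : ∀ i, 0 ≤ Mw i) (hMv0 : ∀ i, 0 ≤ Mv i) (s : S) :
    ∑ a, |ddpol P θ w v s a| ≤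
      ∑ i, ((∑ i' ∈ Finset.univ.erase i, 4 * Mw i' * Mv i) + 6 * Mw i * Mv i) := by
  calc ∑ a, |ddpol P θ w v s a|
      ≤ ∑ a, (∑ i, ((∑ i' ∈ Finset.univ.erase i, 4 * Mw i' * Mv i) + 6 * Mw i * Mv i))
          * bnPol P θ s a :=
        Finset.sum_le_sum fun a _ => abs_ddpol_le P θ w v Mw Mv hMw hMv hMw0 hMv0 s a
    _ = _ := by rw [← Finset.mul_sum, bnPol_sum_one P hDAG θ s, mul_one]

end Smooth4
section Smooth5
set_option linter.unusedSectionVars false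
set_option linter.unusedVariables false
set_option maxHeartbeats 1000000

variable (P : Fin N → Finset (Fin N)) (Ptr : S → JointAct A → S → ℝ) (μ : S → ℝ)

lemma visit_succ (π : Pol S A) (ν : S → ℝ) (t : ℕ) (s' : S) :
    visit Ptr π ν (t + 1) s' = ∑ s, ∑ a, visit Ptr π ν t s * π s a * Ptr s a s' := rfl

lemma kernel_mass (hPtr : IsKernel Ptr) (g : S → JointAct A → ℝ) :
    ∑ s', ∑ s, ∑ a, g s a * Ptr s a s' = ∑ s, ∑ a, g s a := by
  rw [Finset.sum_comm]
  refine Finset.sum_congr rfl fun s _ => ?_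
  rw [Finset.sum_comm]
  refine Finset.sum_congr rfl fun a _ => ?_
  rw [← Finset.mul_sum, hPtr.2 s a, mul_one]

lemma kernel_contraction (hPtr : IsKernel Ptr) (g : S → JointAct A → ℝ) :
    ∑ s', |∑ s, ∑ a, g s a * Ptr s a s'| ≤ ∑ s, ∑ a, |g s a| := by
  calc ∑ s', |∑ s, ∑ a, g s a * Ptr s a s'|
      ≤ ∑ s', ∑ s, ∑ a, |g s a| * Ptr s a s' := by
        refine Finset.sum_le_sum fun s' _ => ?_
        refine (Finset.abs_sum_le_sum_abs _ _).trans (Finset.sum_le_sum fun s _ => ?_)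
        refine (Finset.abs_sum_le_sum_abs _ _).trans (Finset.sum_le_sum fun a _ => ?_)
        rw [abs_mul, abs_of_nonneg (hPtr.1 s a s')]
    _ = ∑ s, ∑ a, |g s a| := kernel_mass Ptr hPtr fun s a => |g s a|

/-- Directional derivative of the state visitation distribution. -/
noncomputable def dvis (θ w : Param S A P) : ℕ → S → ℝ
  | 0 => fun _ => 0
  | t + 1 => fun s' => ∑ s, ∑ a,
      (dvis θ w t s * bnPol P θ s a
        + visit Ptr (bnPol P θ) μ t s * dpol P θ w s a) * Ptr s a s'

/-- Mixed second directional derivative of the state visitation distribution. -/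
noncomputable def ddvis (θ u v : Param S A P) : ℕ → S → ℝ
  | 0 => fun _ => 0
  | t + 1 => fun s' => ∑ s, ∑ a,
      (ddvis θ u v t s * bnPol P θ s a
        + dvis P Ptr μ θ v t s * dpol P θ u s a
        + dvis P Ptr μ θ u t s * dpol P θ v s a
        + visit Ptr (bnPol P θ) μ t s * ddpol P θ u v s a) * Ptr s a s'

lemma visit_nonneg (hPtr : IsKernel Ptr) (hμ : IsDist μ) (θ : Param S A P) (t : ℕ) (s : S) :
    0 ≤ visit Ptr (bnPol P θ) μ t s := by
  induction t generalizing s with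
  | zero => exact hμ.1 s
  | succ t ih =>
    rw [visit_succ]
    refine Finset.sum_nonneg fun s₀ _ => Finset.sum_nonneg fun a _ => ?_
    exact mul_nonneg (mul_nonneg (ih s₀) (bnPol_nonneg P θ s₀ a)) (hPtr.1 s₀ a s)

lemma visit_sum_one (hDAG : IsDAG P) (hPtr : IsKernel Ptr) (hμ : IsDist μ)
    (θ : Param S A P) (t : ℕ) :
    ∑ s, visit Ptr (bnPol P θ) μ t s = 1 := by
  induction t with
  | zero => exact hμ.2
  | succ t ih =>
    calc ∑ s', visit Ptr (bnPol P θ) μ (t+1) s'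
        = ∑ s', ∑ s, ∑ a, (visit Ptr (bnPol P θ) μ t s * bnPol P θ s a) * Ptr s a s' := rfl
      _ = ∑ s, ∑ a, visit Ptr (bnPol P θ) μ t s * bnPol P θ s a :=
          kernel_mass Ptr hPtr _
      _ = ∑ s, visit Ptr (bnPol P θ) μ t s * ∑ a, bnPol P θ s a := by
          refine Finset.sum_congr rfl fun s _ => ?_; rw [Finset.mul_sum]
      _ = 1 := by
          rw [Finset.sum_congr rfl fun s _ => by
            rw [bnPol_sum_one P hDAG θ s, mul_one]]
          exact ih

lemma hasDerivAt_visit (θ w : Param S A P) (t : ℕ) (s : S) (τ₀ : ℝ) :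
    HasDerivAt (fun τ => visit Ptr (bnPol P (θ + τ • w)) μ t s)
      (dvis P Ptr μ (θ + τ₀ • w) w t s) τ₀ := by
  induction t generalizing s with
  | zero =>
    simp only [dvis]
    exact hasDerivAt_const τ₀ (μ s)
  | succ t ih =>
    have : HasDerivAt (fun τ => ∑ s₀, ∑ a,
        visit Ptr (bnPol P (θ + τ • w)) μ t s₀ * bnPol P (θ + τ • w) s₀ a * Ptr s₀ a s)
        (∑ s₀, ∑ a,
          (dvis P Ptr μ (θ + τ₀ • w) w t s₀ * bnPol P (θ + τ₀ • w) s₀ a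
            + visit Ptr (bnPol P (θ + τ₀ • w)) μ t s₀ * dpol P (θ + τ₀ • w) w s₀ a)
            * Ptr s₀ a s) τ₀ := by
      refine HasDerivAt.fun_sum fun s₀ _ => HasDerivAt.fun_sum fun a _ => ?_
      exact ((ih s₀).mul (hasDerivAt_bnPol P θ w s₀ a τ₀)).mul_const (Ptr s₀ a s)
    exact this

lemma hasDerivAt_dvis (θ u v : Param S A P) (t : ℕ) (s : S) (τ₀ : ℝ) :
    HasDerivAt (fun τ => dvis P Ptr μ (θ + τ • u) v t s)
      (ddvis P Ptr μ (θ + τ₀ • u) u v t s) τ₀ := by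
  induction t generalizing s with
  | zero =>
    simpa [dvis, ddvis] using hasDerivAt_const τ₀ (0:ℝ)
  | succ t ih =>
    have : HasDerivAt (fun τ => ∑ s₀, ∑ a,
        (dvis P Ptr μ (θ + τ • u) v t s₀ * bnPol P (θ + τ • u) s₀ a
          + visit Ptr (bnPol P (θ + τ • u)) μ t s₀ * dpol P (θ + τ • u) v s₀ a)
          * Ptr s₀ a s)
        (∑ s₀, ∑ a,
          (ddvis P Ptr μ (θ + τ₀ • u) u v t s₀ * bnPol P (θ + τ₀ • u) s₀ a
            + dvis P Ptr μ (θ + τ₀ • u) v t s₀ * dpol P (θ + τ₀ • u) u s₀ a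
            + dvis P Ptr μ (θ + τ₀ • u) u t s₀ * dpol P (θ + τ₀ • u) v s₀ a
            + visit Ptr (bnPol P (θ + τ₀ • u)) μ t s₀ * ddpol P (θ + τ₀ • u) u v s₀ a)
            * Ptr s₀ a s) τ₀ := by
      refine HasDerivAt.fun_sum fun s₀ _ => HasDerivAt.fun_sum fun a _ => ?_
      have h1 := (ih s₀).mul (hasDerivAt_bnPol P θ u s₀ a τ₀)
      have h2 := (hasDerivAt_visit P Ptr μ θ u t s₀ τ₀).mul (hasDerivAt_dpol P θ u v s₀ a τ₀)
      have := (h1.add h2).mul_const (Ptr s₀ a s)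
      refine this.congr_deriv ?_
      ring
    exact this

lemma sum_dvis_zero (hDAG : IsDAG P) (hPtr : IsKernel Ptr) (hμ : IsDist μ)
    (θ w : Param S A P) (t : ℕ) :
    ∑ s, dvis P Ptr μ θ w t s = 0 := by
  induction t with
  | zero => simp [dvis]
  | succ t ih =>
    calc ∑ s', dvis P Ptr μ θ w (t+1) s'
        = ∑ s, ∑ a, (dvis P Ptr μ θ w t s * bnPol P θ s a
            + visit Ptr (bnPol P θ) μ t s * dpol P θ w s a) := kernel_mass Ptr hPtr _
      _ = ∑ s, (dvis P Ptr μ θ w t s * ∑ a, bnPol P θ s a)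
          + ∑ s, (visit Ptr (bnPol P θ) μ t s * ∑ a, dpol P θ w s a) := by
          rw [← Finset.sum_add_distrib]
          refine Finset.sum_congr rfl fun s _ => ?_
          rw [Finset.mul_sum, Finset.mul_sum, ← Finset.sum_add_distrib]
      _ = 0 := by
          have h1 : ∀ s : S, dvis P Ptr μ θ w t s * ∑ a, bnPol P θ s a
              = dvis P Ptr μ θ w t s := fun s => by rw [bnPol_sum_one P hDAG θ s, mul_one]
          have h2 : ∀ s : S, visit Ptr (bnPol P θ) μ t s * ∑ a, dpol P θ w s a
              = 0 := fun s => by rw [sum_dpol_zero P hDAG θ w s, mul_zero]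
          rw [Finset.sum_congr rfl fun s _ => h1 s, Finset.sum_congr rfl fun s _ => h2 s, ih]
          simp

lemma sum_ddvis_zero (hDAG : IsDAG P) (hPtr : IsKernel Ptr) (hμ : IsDist μ)
    (θ u v : Param S A P) (t : ℕ) :
    ∑ s, ddvis P Ptr μ θ u v t s = 0 := by
  induction t with
  | zero => simp [ddvis]
  | succ t ih =>
    calc ∑ s', ddvis P Ptr μ θ u v (t+1) s'
        = ∑ s, ∑ a, (ddvis P Ptr μ θ u v t s * bnPol P θ s a
            + dvis P Ptr μ θ v t s * dpol P θ u s a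
            + dvis P Ptr μ θ u t s * dpol P θ v s a
            + visit Ptr (bnPol P θ) μ t s * ddpol P θ u v s a) := kernel_mass Ptr hPtr _
      _ = ∑ s, (ddvis P Ptr μ θ u v t s * ∑ a, bnPol P θ s a)
          + ∑ s, (dvis P Ptr μ θ v t s * ∑ a, dpol P θ u s a)
          + ∑ s, (dvis P Ptr μ θ u t s * ∑ a, dpol P θ v s a)
          + ∑ s, (visit Ptr (bnPol P θ) μ t s * ∑ a, ddpol P θ u v s a) := by
          rw [← Finset.sum_add_distrib, ← Finset.sum_add_distrib, ← Finset.sum_add_distrib]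
          refine Finset.sum_congr rfl fun s _ => ?_
          rw [Finset.mul_sum, Finset.mul_sum, Finset.mul_sum, Finset.mul_sum]
          rw [← Finset.sum_add_distrib, ← Finset.sum_add_distrib, ← Finset.sum_add_distrib]
      _ = 0 := by
          have h1 : ∀ s : S, ddvis P Ptr μ θ u v t s * ∑ a, bnPol P θ s a
              = ddvis P Ptr μ θ u v t s := fun s => by rw [bnPol_sum_one P hDAG θ s, mul_one]
          have h2 : ∀ s : S, dvis P Ptr μ θ v t s * ∑ a, dpol P θ u s a
              = 0 := fun s => by rw [sum_dpol_zero P hDAG θ u s, mul_zero]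
          have h3 : ∀ s : S, dvis P Ptr μ θ u t s * ∑ a, dpol P θ v s a
              = 0 := fun s => by rw [sum_dpol_zero P hDAG θ v s, mul_zero]
          have h4 : ∀ s : S, visit Ptr (bnPol P θ) μ t s * ∑ a, ddpol P θ u v s a
              = 0 := fun s => by rw [sum_ddpol_zero P hDAG θ u v s, mul_zero]
          rw [Finset.sum_congr rfl fun s _ => h1 s, Finset.sum_congr rfl fun s _ => h2 s,
            Finset.sum_congr rfl fun s _ => h3 s, Finset.sum_congr rfl fun s _ => h4 s, ih]
          simp

end Smooth5
section Smooth6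
set_option linter.unusedSectionVars false
set_option linter.unusedVariables false
set_option maxHeartbeats 1000000

variable (P : Fin N → Finset (Fin N)) (Ptr : S → JointAct A → S → ℝ) (μ : S → ℝ)

lemma sum_abs_dvis_le (hDAG : IsDAG P) (hPtr : IsKernel Ptr) (hμ : IsDist μ)
    (θ w : Param S A P) (Mw : Fin N → ℝ)
    (hMw : ∀ i s p b, |w i s p b| ≤ Mw i) (hMw0 : ∀ i, 0 ≤ Mw i) (t : ℕ) :
    ∑ s, |dvis P Ptr μ θ w t s| ≤ (2 * ∑ i, Mw i) * t := by
  induction t with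
  | zero => simp [dvis]
  | succ t ih =>
    have hstep : ∑ s', |dvis P Ptr μ θ w (t+1) s'|
        ≤ ∑ s, ∑ a, |dvis P Ptr μ θ w t s * bnPol P θ s a
            + visit Ptr (bnPol P θ) μ t s * dpol P θ w s a| :=
      kernel_contraction Ptr hPtr _
    have hsplit : ∑ s, ∑ a, |dvis P Ptr μ θ w t s * bnPol P θ s a
          + visit Ptr (bnPol P θ) μ t s * dpol P θ w s a|
        ≤ (∑ s, |dvis P Ptr μ θ w t s|) + (2 * ∑ i, Mw i) := by
      calc ∑ s, ∑ a, |dvis P Ptr μ θ w t s * bnPol P θ s a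
            + visit Ptr (bnPol P θ) μ t s * dpol P θ w s a|
          ≤ ∑ s, ∑ a, (|dvis P Ptr μ θ w t s| * bnPol P θ s a
            + visit Ptr (bnPol P θ) μ t s * |dpol P θ w s a|) := by
            refine Finset.sum_le_sum fun s _ => Finset.sum_le_sum fun a _ => ?_
            refine (abs_add_le _ _).trans (add_le_add ?_ ?_)
            · rw [abs_mul, abs_of_nonneg (bnPol_nonneg P θ s a)]
            · rw [abs_mul, abs_of_nonneg (visit_nonneg P Ptr μ hPtr hμ θ t s)]
        _ = (∑ s, |dvis P Ptr μ θ w t s| * ∑ a, bnPol P θ s a)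
            + ∑ s, visit Ptr (bnPol P θ) μ t s * ∑ a, |dpol P θ w s a| := by
            rw [← Finset.sum_add_distrib]
            refine Finset.sum_congr rfl fun s _ => ?_
            rw [Finset.mul_sum, Finset.mul_sum, ← Finset.sum_add_distrib]
        _ ≤ (∑ s, |dvis P Ptr μ θ w t s|) + (2 * ∑ i, Mw i) := by
            refine add_le_add ?_ ?_
            · refine le_of_eq (Finset.sum_congr rfl fun s _ => ?_)
              rw [bnPol_sum_one P hDAG θ s, mul_one]
            · calc ∑ s, visit Ptr (bnPol P θ) μ t s * ∑ a, |dpol P θ w s a|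
                  ≤ ∑ s, visit Ptr (bnPol P θ) μ t s * (2 * ∑ i, Mw i) := by
                    refine Finset.sum_le_sum fun s _ => ?_
                    exact mul_le_mul_of_nonneg_left
                      (sum_abs_dpol_le P hDAG θ w Mw hMw hMw0 s)
                      (visit_nonneg P Ptr μ hPtr hμ θ t s)
                _ = 2 * ∑ i, Mw i := by
                    rw [← Finset.sum_mul, visit_sum_one P Ptr μ hDAG hPtr hμ θ t, one_mul]
    have hfin := hstep.trans hsplit
    have := add_le_add_right ih ((2 * ∑ i, Mw i))
    push_cast
    calc ∑ s', |dvis P Ptr μ θ w (t+1) s'| ≤ (2 * ∑ i, Mw i) * t + (2 * ∑ i, Mw i) :=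
        hfin.trans (by linarith)
      _ = (2 * ∑ i, Mw i) * ((t : ℝ) + 1) := by ring

lemma sum_abs_ddvis_le (hDAG : IsDAG P) (hPtr : IsKernel Ptr) (hμ : IsDist μ)
    (θ u v : Param S A P) (Mu Mv : Fin N → ℝ)
    (hMu : ∀ i s p b, |u i s p b| ≤ Mu i) (hMv : ∀ i s p b, |v i s p b| ≤ Mv i)
    (hMu0 : ∀ i, 0 ≤ Mu i) (hMv0 : ∀ i, 0 ≤ Mv i) (t : ℕ) :
    ∑ s, |ddvis P Ptr μ θ u v t s|
      ≤ 4 * (∑ i, Mu i) * (∑ i, Mv i) * (t * (t - 1))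
        + (∑ i, ((∑ i' ∈ Finset.univ.erase i, 4 * Mu i' * Mv i) + 6 * Mu i * Mv i)) * t := by
  set SU := ∑ i, Mu i with hSU
  set SV := ∑ i, Mv i with hSV
  set B2 := ∑ i, ((∑ i' ∈ Finset.univ.erase i, 4 * Mu i' * Mv i) + 6 * Mu i * Mv i) with hB2
  have hSU0 : 0 ≤ SU := Finset.sum_nonneg fun i _ => hMu0 i
  have hSV0 : 0 ≤ SV := Finset.sum_nonneg fun i _ => hMv0 i
  induction t with
  | zero => simp [ddvis]
  | succ t ih =>
    have hstep : ∑ s', |ddvis P Ptr μ θ u v (t+1) s'|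
        ≤ ∑ s, ∑ a, |ddvis P Ptr μ θ u v t s * bnPol P θ s a
            + dvis P Ptr μ θ v t s * dpol P θ u s a
            + dvis P Ptr μ θ u t s * dpol P θ v s a
            + visit Ptr (bnPol P θ) μ t s * ddpol P θ u v s a| :=
      kernel_contraction Ptr hPtr _
    have hsplit : ∑ s, ∑ a, |ddvis P Ptr μ θ u v t s * bnPol P θ s a
            + dvis P Ptr μ θ v t s * dpol P θ u s a
            + dvis P Ptr μ θ u t s * dpol P θ v s a
            + visit Ptr (bnPol P θ) μ t s * ddpol P θ u v s a|
        ≤ (∑ s, |ddvis P Ptr μ θ u v t s|)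
          + (2 * SV) * t * (2 * SU) + (2 * SU) * t * (2 * SV) + B2 := by
      calc ∑ s, ∑ a, |ddvis P Ptr μ θ u v t s * bnPol P θ s a
            + dvis P Ptr μ θ v t s * dpol P θ u s a
            + dvis P Ptr μ θ u t s * dpol P θ v s a
            + visit Ptr (bnPol P θ) μ t s * ddpol P θ u v s a|
          ≤ ∑ s, ∑ a, (|ddvis P Ptr μ θ u v t s| * bnPol P θ s a
            + |dvis P Ptr μ θ v t s| * |dpol P θ u s a|
            + |dvis P Ptr μ θ u t s| * |dpol P θ v s a|
            + visit Ptr (bnPol P θ) μ t s * |ddpol P θ u v s a|) := by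
            refine Finset.sum_le_sum fun s _ => Finset.sum_le_sum fun a _ => ?_
            refine (abs_add_le _ _).trans (add_le_add ((abs_add_le _ _).trans (add_le_add
              ((abs_add_le _ _).trans (add_le_add ?_ ?_)) ?_)) ?_)
            · rw [abs_mul, abs_of_nonneg (bnPol_nonneg P θ s a)]
            · rw [abs_mul]
            · rw [abs_mul]
            · rw [abs_mul, abs_of_nonneg (visit_nonneg P Ptr μ hPtr hμ θ t s)]
        _ = (∑ s, |ddvis P Ptr μ θ u v t s| * ∑ a, bnPol P θ s a)
            + (∑ s, |dvis P Ptr μ θ v t s| * ∑ a, |dpol P θ u s a|)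
            + (∑ s, |dvis P Ptr μ θ u t s| * ∑ a, |dpol P θ v s a|)
            + ∑ s, visit Ptr (bnPol P θ) μ t s * ∑ a, |ddpol P θ u v s a| := by
            rw [← Finset.sum_add_distrib, ← Finset.sum_add_distrib, ← Finset.sum_add_distrib]
            refine Finset.sum_congr rfl fun s _ => ?_
            rw [Finset.mul_sum, Finset.mul_sum, Finset.mul_sum, Finset.mul_sum]
            rw [← Finset.sum_add_distrib, ← Finset.sum_add_distrib, ← Finset.sum_add_distrib]
        _ ≤ (∑ s, |ddvis P Ptr μ θ u v t s|)
            + (2 * SV) * t * (2 * SU) + (2 * SU) * t * (2 * SV) + B2 := by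
            refine add_le_add (add_le_add (add_le_add ?_ ?_) ?_) ?_
            · refine le_of_eq (Finset.sum_congr rfl fun s _ => ?_)
              rw [bnPol_sum_one P hDAG θ s, mul_one]
            · calc ∑ s, |dvis P Ptr μ θ v t s| * ∑ a, |dpol P θ u s a|
                  ≤ ∑ s, |dvis P Ptr μ θ v t s| * (2 * SU) := by
                    refine Finset.sum_le_sum fun s _ => ?_
                    exact mul_le_mul_of_nonneg_left
                      (sum_abs_dpol_le P hDAG θ u Mu hMu hMu0 s) (abs_nonneg _)
                _ = (∑ s, |dvis P Ptr μ θ v t s|) * (2 * SU) := by rw [Finset.sum_mul]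
                _ ≤ ((2 * SV) * t) * (2 * SU) := by
                    refine mul_le_mul_of_nonneg_right ?_ (by positivity)
                    exact sum_abs_dvis_le P Ptr μ hDAG hPtr hμ θ v Mv hMv hMv0 t
            · calc ∑ s, |dvis P Ptr μ θ u t s| * ∑ a, |dpol P θ v s a|
                  ≤ ∑ s, |dvis P Ptr μ θ u t s| * (2 * SV) := by
                    refine Finset.sum_le_sum fun s _ => ?_
                    exact mul_le_mul_of_nonneg_left
                      (sum_abs_dpol_le P hDAG θ v Mv hMv hMv0 s) (abs_nonneg _)
                _ = (∑ s, |dvis P Ptr μ θ u t s|) * (2 * SV) := by rw [Finset.sum_mul]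
                _ ≤ ((2 * SU) * t) * (2 * SV) := by
                    refine mul_le_mul_of_nonneg_right ?_ (by positivity)
                    exact sum_abs_dvis_le P Ptr μ hDAG hPtr hμ θ u Mu hMu hMu0 t
            · calc ∑ s, visit Ptr (bnPol P θ) μ t s * ∑ a, |ddpol P θ u v s a|
                  ≤ ∑ s, visit Ptr (bnPol P θ) μ t s * B2 := by
                    refine Finset.sum_le_sum fun s _ => ?_
                    exact mul_le_mul_of_nonneg_left
                      (sum_abs_ddpol_le P hDAG θ u v Mu Mv hMu hMv hMu0 hMv0 s)
                      (visit_nonneg P Ptr μ hPtr hμ θ t s)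
                _ = B2 := by
                    rw [← Finset.sum_mul, visit_sum_one P Ptr μ hDAG hPtr hμ θ t, one_mul]
    have hfin := hstep.trans hsplit
    calc ∑ s', |ddvis P Ptr μ θ u v (t+1) s'|
        ≤ (4 * SU * SV * (t * (t - 1)) + B2 * t)
          + (2 * SV) * t * (2 * SU) + (2 * SU) * t * (2 * SV) + B2 := by
          refine hfin.trans ?_
          exact add_le_add (add_le_add (add_le_add ih le_rfl) le_rfl) le_rfl
      _ = 4 * SU * SV * (((t:ℝ) + 1) * ((t:ℝ) + 1 - 1)) + B2 * ((t:ℝ) + 1) := by ring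
      _ = 4 * SU * SV * ((((t+1) : ℕ) : ℝ) * ((((t+1) : ℕ) : ℝ) - 1))
          + B2 * (((t+1) : ℕ) : ℝ) := by push_cast; ring

end Smooth6
section Smooth7

lemma tsum_quad_geometric {γ : ℝ} (hγ0 : 0 ≤ γ) (hγ1 : γ < 1) :
    ∑' t : ℕ, ((t:ℝ) + 1) * ((t:ℝ) + 2) * γ ^ t = 2 / (1 - γ) ^ 3 := by
  have hγn : ‖γ‖ < 1 := by rwa [Real.norm_eq_abs, abs_of_nonneg hγ0]
  have hne : (1:ℝ) - γ ≠ 0 := by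
    intro h
    have : γ = 1 := by linarith
    exact absurd (this ▸ hγ1) (lt_irrefl _)
  have hA : ∑' t : ℕ, γ ^ t = (1 - γ)⁻¹ := tsum_geometric_of_lt_one hγ0 hγ1
  have hA1 : ∑' t : ℕ, (t:ℝ) * γ ^ t = γ / (1 - γ) ^ 2 :=
    tsum_coe_mul_geometric_of_norm_lt_one hγn
  have s0 : Summable (fun t : ℕ => γ ^ t) := summable_geometric_of_lt_one hγ0 hγ1
  have s1 : Summable (fun t : ℕ => (t:ℝ) * γ ^ t) := by
    simpa using summable_pow_mul_geometric_of_norm_lt_one (R := ℝ) 1 hγn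
  have s2 : Summable (fun t : ℕ => (t:ℝ) ^ 2 * γ ^ t) :=
    summable_pow_mul_geometric_of_norm_lt_one (R := ℝ) 2 hγn
  set B := ∑' t : ℕ, (t:ℝ) ^ 2 * γ ^ t with hB
  have hshift : B = γ * B + 2 * γ * (γ / (1 - γ) ^ 2) + γ * (1 - γ)⁻¹ := by
    have h0 : B = ∑' t : ℕ, (((t:ℕ)+1:ℕ):ℝ) ^ 2 * γ ^ (t + 1) := by
      rw [hB, s2.tsum_eq_zero_add]
      norm_num
    have hsplit : (fun t : ℕ => (((t:ℕ)+1:ℕ):ℝ) ^ 2 * γ ^ (t + 1))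
        = fun t : ℕ => (γ * ((t:ℝ)^2 * γ^t) + 2 * γ * ((t:ℝ) * γ^t)) + γ * γ^t := by
      funext t
      push_cast
      ring
    calc B = ∑' t : ℕ, (((t:ℕ)+1:ℕ):ℝ) ^ 2 * γ ^ (t + 1) := h0
      _ = γ * B + 2 * γ * (γ / (1 - γ) ^ 2) + γ * (1 - γ)⁻¹ := by
          rw [hsplit]
          rw [Summable.tsum_add ((s2.mul_left γ).add (s1.mul_left (2*γ))) (s0.mul_left γ)]
          rw [Summable.tsum_add (s2.mul_left γ) (s1.mul_left (2*γ))]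
          rw [tsum_mul_left, tsum_mul_left, tsum_mul_left]
          rw [← hB, hA1, hA]
  have hBval : B = (2 * γ * (γ / (1 - γ) ^ 2) + γ * (1 - γ)⁻¹) / (1 - γ) := by
    have h1 : B * (1 - γ) = 2 * γ * (γ / (1 - γ) ^ 2) + γ * (1 - γ)⁻¹ := by linarith
    field_simp at h1 ⊢
    linarith
  have hmain : (fun t : ℕ => ((t:ℝ) + 1) * ((t:ℝ) + 2) * γ ^ t)
      = fun t : ℕ => ((t:ℝ)^2 * γ^t + 3 * ((t:ℝ) * γ^t)) + 2 * γ^t := by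
    funext t
    ring
  rw [hmain]
  rw [Summable.tsum_add (s2.add (s1.mul_left 3)) (s0.mul_left 2)]
  rw [Summable.tsum_add s2 (s1.mul_left 3)]
  rw [tsum_mul_left, tsum_mul_left, ← hB, hA1, hA, hBval]
  field_simp
  ring

end Smooth7
section Smooth8
set_option linter.unusedSectionVars false
set_option linter.unusedVariables false
set_option maxHeartbeats 1000000

variable (P : Fin N → Finset (Fin N)) (γ : ℝ) (Ptr : S → JointAct A → S → ℝ)
  (r : S → JointAct A → ℝ) (μ : S → ℝ)

noncomputable def hfun (θ : Param S A P) (t : ℕ) : ℝ :=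
  ∑ s, ∑ a, visit Ptr (bnPol P θ) μ t s * bnPol P θ s a * r s a

noncomputable def dhfun (θ w : Param S A P) (t : ℕ) : ℝ :=
  ∑ s, ∑ a, (dvis P Ptr μ θ w t s * bnPol P θ s a
    + visit Ptr (bnPol P θ) μ t s * dpol P θ w s a) * r s a

noncomputable def ddhfun (θ u v : Param S A P) (t : ℕ) : ℝ :=
  ∑ s, ∑ a, (ddvis P Ptr μ θ u v t s * bnPol P θ s a
    + dvis P Ptr μ θ v t s * dpol P θ u s a
    + dvis P Ptr μ θ u t s * dpol P θ v s a
    + visit Ptr (bnPol P θ) μ t s * ddpol P θ u v s a) * r s a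

noncomputable def Phi (θ w : Param S A P) : ℝ :=
  ∑' t : ℕ, γ ^ t * dhfun P Ptr r μ θ w t

lemma Vval_eq_tsum_hfun (θ : Param S A P) :
    Vval γ Ptr r (bnPol P θ) μ = ∑' t : ℕ, γ ^ t * hfun P Ptr r μ θ t := rfl

lemma hasDerivAt_hfun (θ w : Param S A P) (t : ℕ) (τ₀ : ℝ) :
    HasDerivAt (fun τ => hfun P Ptr r μ (θ + τ • w) t)
      (dhfun P Ptr r μ (θ + τ₀ • w) w t) τ₀ := by
  unfold hfun dhfun
  refine HasDerivAt.fun_sum fun s _ => HasDerivAt.fun_sum fun a _ => ?_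
  exact ((hasDerivAt_visit P Ptr μ θ w t s τ₀).mul
    (hasDerivAt_bnPol P θ w s a τ₀)).mul_const (r s a)

lemma hasDerivAt_dhfun (θ u v : Param S A P) (t : ℕ) (τ₀ : ℝ) :
    HasDerivAt (fun τ => dhfun P Ptr r μ (θ + τ • u) v t)
      (ddhfun P Ptr r μ (θ + τ₀ • u) u v t) τ₀ := by
  unfold dhfun ddhfun
  refine HasDerivAt.fun_sum fun s _ => HasDerivAt.fun_sum fun a _ => ?_
  have h1 := (hasDerivAt_dvis P Ptr μ θ u v t s τ₀).mul (hasDerivAt_bnPol P θ u s a τ₀)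
  have h2 := (hasDerivAt_visit P Ptr μ θ u t s τ₀).mul (hasDerivAt_dpol P θ u v s a τ₀)
  have := (h1.add h2).mul_const (r s a)
  refine this.congr_deriv ?_
  ring

lemma abs_hfun_le (hDAG : IsDAG P) (hPtr : IsKernel Ptr) (hμ : IsDist μ)
    (R0 : ℝ) (hR0 : ∀ s a, |r s a| ≤ R0) (θ : Param S A P) (t : ℕ) :
    |hfun P Ptr r μ θ t| ≤ R0 := by
  unfold hfun
  calc |∑ s, ∑ a, visit Ptr (bnPol P θ) μ t s * bnPol P θ s a * r s a|
      ≤ ∑ s, ∑ a, visit Ptr (bnPol P θ) μ t s * bnPol P θ s a * R0 := by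
        refine (Finset.abs_sum_le_sum_abs _ _).trans (Finset.sum_le_sum fun s _ => ?_)
        refine (Finset.abs_sum_le_sum_abs _ _).trans (Finset.sum_le_sum fun a _ => ?_)
        rw [abs_mul, abs_mul, abs_of_nonneg (visit_nonneg P Ptr μ hPtr hμ θ t s),
          abs_of_nonneg (bnPol_nonneg P θ s a)]
        exact mul_le_mul_of_nonneg_left (hR0 s a)
          (mul_nonneg (visit_nonneg P Ptr μ hPtr hμ θ t s) (bnPol_nonneg P θ s a))
    _ = R0 := by
        have : ∀ s : S, ∑ a, visit Ptr (bnPol P θ) μ t s * bnPol P θ s a * R0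
            = visit Ptr (bnPol P θ) μ t s * R0 := fun s => by
          rw [show (fun a => visit Ptr (bnPol P θ) μ t s * bnPol P θ s a * R0)
              = fun a => visit Ptr (bnPol P θ) μ t s * R0 * bnPol P θ s a from
            funext fun a => by ring]
          rw [← Finset.mul_sum, bnPol_sum_one P hDAG θ s, mul_one]
        rw [Finset.sum_congr rfl fun s _ => this s, ← Finset.sum_mul,
          visit_sum_one P Ptr μ hDAG hPtr hμ θ t, one_mul]

lemma abs_dhfun_le (hDAG : IsDAG P) (hPtr : IsKernel Ptr) (hμ : IsDist μ)
    (R0 : ℝ) (hR0 : ∀ s a, |r s a| ≤ R0) (hR00 : 0 ≤ R0)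
    (θ w : Param S A P) (Mw : Fin N → ℝ)
    (hMw : ∀ i s p b, |w i s p b| ≤ Mw i) (hMw0 : ∀ i, 0 ≤ Mw i) (t : ℕ) :
    |dhfun P Ptr r μ θ w t| ≤ R0 * ((2 * ∑ i, Mw i) * t + (2 * ∑ i, Mw i)) := by
  unfold dhfun
  have key : ∑ s, ∑ a, |dvis P Ptr μ θ w t s * bnPol P θ s a
      + visit Ptr (bnPol P θ) μ t s * dpol P θ w s a|
      ≤ (2 * ∑ i, Mw i) * t + (2 * ∑ i, Mw i) := by
    calc ∑ s, ∑ a, |dvis P Ptr μ θ w t s * bnPol P θ s a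
          + visit Ptr (bnPol P θ) μ t s * dpol P θ w s a|
        ≤ ∑ s, ∑ a, (|dvis P Ptr μ θ w t s| * bnPol P θ s a
          + visit Ptr (bnPol P θ) μ t s * |dpol P θ w s a|) := by
          refine Finset.sum_le_sum fun s _ => Finset.sum_le_sum fun a _ => ?_
          refine (abs_add_le _ _).trans (add_le_add ?_ ?_)
          · rw [abs_mul, abs_of_nonneg (bnPol_nonneg P θ s a)]
          · rw [abs_mul, abs_of_nonneg (visit_nonneg P Ptr μ hPtr hμ θ t s)]
      _ = (∑ s, |dvis P Ptr μ θ w t s| * ∑ a, bnPol P θ s a)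
          + ∑ s, visit Ptr (bnPol P θ) μ t s * ∑ a, |dpol P θ w s a| := by
          rw [← Finset.sum_add_distrib]
          refine Finset.sum_congr rfl fun s _ => ?_
          rw [Finset.mul_sum, Finset.mul_sum, ← Finset.sum_add_distrib]
      _ ≤ (2 * ∑ i, Mw i) * t + (2 * ∑ i, Mw i) := by
          refine add_le_add ?_ ?_
          · calc ∑ s, |dvis P Ptr μ θ w t s| * ∑ a, bnPol P θ s a
                = ∑ s, |dvis P Ptr μ θ w t s| := by
                  refine Finset.sum_congr rfl fun s _ => ?_
                  rw [bnPol_sum_one P hDAG θ s, mul_one]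
              _ ≤ (2 * ∑ i, Mw i) * t :=
                  sum_abs_dvis_le P Ptr μ hDAG hPtr hμ θ w Mw hMw hMw0 t
          · calc ∑ s, visit Ptr (bnPol P θ) μ t s * ∑ a, |dpol P θ w s a|
                ≤ ∑ s, visit Ptr (bnPol P θ) μ t s * (2 * ∑ i, Mw i) :=
                  Finset.sum_le_sum fun s _ => mul_le_mul_of_nonneg_left
                    (sum_abs_dpol_le P hDAG θ w Mw hMw hMw0 s)
                    (visit_nonneg P Ptr μ hPtr hμ θ t s)
              _ = 2 * ∑ i, Mw i := by
                  rw [← Finset.sum_mul, visit_sum_one P Ptr μ hDAG hPtr hμ θ t, one_mul]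
  calc |∑ s, ∑ a, (dvis P Ptr μ θ w t s * bnPol P θ s a
        + visit Ptr (bnPol P θ) μ t s * dpol P θ w s a) * r s a|
      ≤ ∑ s, ∑ a, |dvis P Ptr μ θ w t s * bnPol P θ s a
        + visit Ptr (bnPol P θ) μ t s * dpol P θ w s a| * R0 := by
        refine (Finset.abs_sum_le_sum_abs _ _).trans (Finset.sum_le_sum fun s _ => ?_)
        refine (Finset.abs_sum_le_sum_abs _ _).trans (Finset.sum_le_sum fun a _ => ?_)
        rw [abs_mul]
        exact mul_le_mul_of_nonneg_left (hR0 s a) (abs_nonneg _)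
    _ = (∑ s, ∑ a, |dvis P Ptr μ θ w t s * bnPol P θ s a
        + visit Ptr (bnPol P θ) μ t s * dpol P θ w s a|) * R0 := by
        rw [Finset.sum_mul]
        exact Finset.sum_congr rfl fun s _ => by rw [Finset.sum_mul]
    _ ≤ ((2 * ∑ i, Mw i) * t + (2 * ∑ i, Mw i)) * R0 :=
        mul_le_mul_of_nonneg_right key hR00
    _ = R0 * ((2 * ∑ i, Mw i) * t + (2 * ∑ i, Mw i)) := by ring

lemma summable_hfun (hDAG : IsDAG P) (hγ0 : 0 ≤ γ) (hγ1 : γ < 1)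
    (hPtr : IsKernel Ptr) (hμ : IsDist μ)
    (R0 : ℝ) (hR0 : ∀ s a, |r s a| ≤ R0) (θ : Param S A P) :
    Summable (fun t : ℕ => γ ^ t * hfun P Ptr r μ θ t) := by
  have hγn : ‖γ‖ < 1 := by rwa [Real.norm_eq_abs, abs_of_nonneg hγ0]
  refine Summable.of_norm_bounded (g := fun t => γ ^ t * R0)
    (((summable_geometric_of_lt_one hγ0 hγ1)).mul_right R0) fun t => ?_
  rw [Real.norm_eq_abs, abs_mul, abs_of_nonneg (pow_nonneg hγ0 t)]
  exact mul_le_mul_of_nonneg_left (abs_hfun_le P Ptr r μ hDAG hPtr hμ R0 hR0 θ t)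
    (pow_nonneg hγ0 t)

lemma summable_bound_aux (hγ0 : 0 ≤ γ) (hγ1 : γ < 1) (C D : ℝ) :
    Summable (fun t : ℕ => γ ^ t * (C * t + D)) := by
  have hγn : ‖γ‖ < 1 := by rwa [Real.norm_eq_abs, abs_of_nonneg hγ0]
  have h1 : Summable (fun t : ℕ => (t:ℝ) * γ ^ t) := by
    simpa using summable_pow_mul_geometric_of_norm_lt_one (R := ℝ) 1 hγn
  have h0 : Summable (fun t : ℕ => γ ^ t) := summable_geometric_of_lt_one hγ0 hγ1
  have : (fun t : ℕ => γ ^ t * (C * t + D))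
      = fun t : ℕ => C * ((t:ℝ) * γ ^ t) + D * γ ^ t := by
    funext t
    ring
  rw [this]
  exact (h1.mul_left C).add (h0.mul_left D)

lemma hasDerivAt_Vpath (hDAG : IsDAG P) (hγ0 : 0 ≤ γ) (hγ1 : γ < 1)
    (hPtr : IsKernel Ptr) (hμ : IsDist μ)
    (R0 : ℝ) (hR0 : ∀ s a, |r s a| ≤ R0) (hR00 : 0 ≤ R0)
    (θ w : Param S A P) (Mw : Fin N → ℝ)
    (hMw : ∀ i s p b, |w i s p b| ≤ Mw i) (hMw0 : ∀ i, 0 ≤ Mw i) (τ₀ : ℝ) :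
    HasDerivAt (fun τ => Vval γ Ptr r (bnPol P (θ + τ • w)) μ)
      (Phi P γ Ptr r μ (θ + τ₀ • w) w) τ₀ := by
  have h := hasDerivAt_tsum
    (u := fun t : ℕ => γ ^ t * (R0 * ((2 * ∑ i, Mw i) * t + (2 * ∑ i, Mw i))))
    (g := fun t τ => γ ^ t * hfun P Ptr r μ (θ + τ • w) t)
    (g' := fun t τ => γ ^ t * dhfun P Ptr r μ (θ + τ • w) w t)
    (by
      have : (fun t : ℕ => γ ^ t * (R0 * ((2 * ∑ i, Mw i) * t + (2 * ∑ i, Mw i))))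
          = fun t : ℕ => γ ^ t * ((R0 * (2 * ∑ i, Mw i)) * t + R0 * (2 * ∑ i, Mw i)) := by
        funext t
        ring
      rw [this]
      exact summable_bound_aux γ hγ0 hγ1 _ _)
    (fun t τ => (hasDerivAt_hfun P Ptr r μ θ w t τ).const_mul (γ ^ t))
    (fun t τ => by
      rw [Real.norm_eq_abs, abs_mul, abs_of_nonneg (pow_nonneg hγ0 t)]
      exact mul_le_mul_of_nonneg_left
        (abs_dhfun_le P Ptr r μ hDAG hPtr hμ R0 hR0 hR00 (θ + τ • w) w Mw hMw hMw0 t)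
        (pow_nonneg hγ0 t))
    (summable_hfun P γ Ptr r μ hDAG hγ0 hγ1 hPtr hμ R0 hR0 (θ + (0:ℝ) • w)) τ₀
  exact h

lemma abs_basis_le (i : Fin N) (s : S) (p : ParAct A P i) (ai : A i)
    (i' : Fin N) (s' : S) (p' : ParAct A P i') (b : A i') :
    |basis P i s p ai i' s' p' b| ≤ 1 := by
  unfold basis
  by_cases h : i' = i
  · subst h
    rw [Pi.single_eq_same]
    split_ifs <;> norm_num
  · rw [Pi.single_eq_of_ne h]
    norm_num

lemma gradV_eq_Phi (hDAG : IsDAG P) (hγ0 : 0 ≤ γ) (hγ1 : γ < 1)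
    (hPtr : IsKernel Ptr) (hμ : IsDist μ)
    (R0 : ℝ) (hR0 : ∀ s a, |r s a| ≤ R0) (hR00 : 0 ≤ R0)
    (θ : Param S A P) (i : Fin N) (s : S) (p : ParAct A P i) (ai : A i) :
    gradV γ Ptr r μ P θ i s p ai = Phi P γ Ptr r μ θ (basis P i s p ai) := by
  have h := hasDerivAt_Vpath P γ Ptr r μ hDAG hγ0 hγ1 hPtr hμ R0 hR0 hR00 θ
    (basis P i s p ai) (fun _ => 1)
    (fun i' s' p' b => abs_basis_le P i s p ai i' s' p' b) (fun _ => zero_le_one) 0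
  rw [param_path_zero] at h
  exact h.deriv

end Smooth8
section Smooth9
set_option linter.unusedSectionVars false
set_option linter.unusedVariables false
set_option maxHeartbeats 1000000

variable (P : Fin N → Finset (Fin N)) (γ : ℝ) (Ptr : S → JointAct A → S → ℝ)
  (r : S → JointAct A → ℝ) (μ : S → ℝ)

lemma sum_sum_abs_mix_le (hDAG : IsDAG P) (hPtr : IsKernel Ptr) (hμ : IsDist μ)
    (θ u v : Param S A P) (Mu Mv : Fin N → ℝ)
    (hMu : ∀ i s p b, |u i s p b| ≤ Mu i) (hMv : ∀ i s p b, |v i s p b| ≤ Mv i)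
    (hMu0 : ∀ i, 0 ≤ Mu i) (hMv0 : ∀ i, 0 ≤ Mv i) (t : ℕ) :
    ∑ s, ∑ a, |ddvis P Ptr μ θ u v t s * bnPol P θ s a
        + dvis P Ptr μ θ v t s * dpol P θ u s a
        + dvis P Ptr μ θ u t s * dpol P θ v s a
        + visit Ptr (bnPol P θ) μ t s * ddpol P θ u v s a|
      ≤ (4 * (∑ i, Mu i) * (∑ i, Mv i) * (t * ((t:ℝ) - 1))
          + (∑ i, ((∑ i' ∈ Finset.univ.erase i, 4 * Mu i' * Mv i) + 6 * Mu i * Mv i)) * t)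
        + (2 * ∑ i, Mv i) * t * (2 * ∑ i, Mu i)
        + (2 * ∑ i, Mu i) * t * (2 * ∑ i, Mv i)
        + (∑ i, ((∑ i' ∈ Finset.univ.erase i, 4 * Mu i' * Mv i) + 6 * Mu i * Mv i)) := by
  set SU := ∑ i, Mu i with hSU
  set SV := ∑ i, Mv i with hSV
  set B2 := ∑ i, ((∑ i' ∈ Finset.univ.erase i, 4 * Mu i' * Mv i) + 6 * Mu i * Mv i) with hB2
  calc ∑ s, ∑ a, |ddvis P Ptr μ θ u v t s * bnPol P θ s a
        + dvis P Ptr μ θ v t s * dpol P θ u s a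
        + dvis P Ptr μ θ u t s * dpol P θ v s a
        + visit Ptr (bnPol P θ) μ t s * ddpol P θ u v s a|
      ≤ ∑ s, ∑ a, (|ddvis P Ptr μ θ u v t s| * bnPol P θ s a
        + |dvis P Ptr μ θ v t s| * |dpol P θ u s a|
        + |dvis P Ptr μ θ u t s| * |dpol P θ v s a|
        + visit Ptr (bnPol P θ) μ t s * |ddpol P θ u v s a|) := by
        refine Finset.sum_le_sum fun s _ => Finset.sum_le_sum fun a _ => ?_
        refine (abs_add_le _ _).trans (add_le_add ((abs_add_le _ _).trans (add_le_add
          ((abs_add_le _ _).trans (add_le_add ?_ ?_)) ?_)) ?_)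
        · rw [abs_mul, abs_of_nonneg (bnPol_nonneg P θ s a)]
        · rw [abs_mul]
        · rw [abs_mul]
        · rw [abs_mul, abs_of_nonneg (visit_nonneg P Ptr μ hPtr hμ θ t s)]
    _ = (∑ s, |ddvis P Ptr μ θ u v t s| * ∑ a, bnPol P θ s a)
        + (∑ s, |dvis P Ptr μ θ v t s| * ∑ a, |dpol P θ u s a|)
        + (∑ s, |dvis P Ptr μ θ u t s| * ∑ a, |dpol P θ v s a|)
        + ∑ s, visit Ptr (bnPol P θ) μ t s * ∑ a, |ddpol P θ u v s a| := by
        rw [← Finset.sum_add_distrib, ← Finset.sum_add_distrib, ← Finset.sum_add_distrib]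
        refine Finset.sum_congr rfl fun s _ => ?_
        rw [Finset.mul_sum, Finset.mul_sum, Finset.mul_sum, Finset.mul_sum]
        rw [← Finset.sum_add_distrib, ← Finset.sum_add_distrib, ← Finset.sum_add_distrib]
    _ ≤ (4 * SU * SV * (t * ((t:ℝ) - 1)) + B2 * t)
        + (2 * SV) * t * (2 * SU) + (2 * SU) * t * (2 * SV) + B2 := by
        refine add_le_add (add_le_add (add_le_add ?_ ?_) ?_) ?_
        · calc ∑ s, |ddvis P Ptr μ θ u v t s| * ∑ a, bnPol P θ s a
              = ∑ s, |ddvis P Ptr μ θ u v t s| := by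
                refine Finset.sum_congr rfl fun s _ => ?_
                rw [bnPol_sum_one P hDAG θ s, mul_one]
            _ ≤ 4 * SU * SV * (t * ((t:ℝ) - 1)) + B2 * t :=
                sum_abs_ddvis_le P Ptr μ hDAG hPtr hμ θ u v Mu Mv hMu hMv hMu0 hMv0 t
        · calc ∑ s, |dvis P Ptr μ θ v t s| * ∑ a, |dpol P θ u s a|
              ≤ ∑ s, |dvis P Ptr μ θ v t s| * (2 * SU) :=
                Finset.sum_le_sum fun s _ => mul_le_mul_of_nonneg_left
                  (sum_abs_dpol_le P hDAG θ u Mu hMu hMu0 s) (abs_nonneg _)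
            _ = (∑ s, |dvis P Ptr μ θ v t s|) * (2 * SU) := by rw [Finset.sum_mul]
            _ ≤ ((2 * SV) * t) * (2 * SU) := by
                refine mul_le_mul_of_nonneg_right ?_ ?_
                · exact sum_abs_dvis_le P Ptr μ hDAG hPtr hμ θ v Mv hMv hMv0 t
                · have := Finset.sum_nonneg fun i (_ : i ∈ Finset.univ) => hMu0 i
                  rw [← hSU] at this
                  linarith
        · calc ∑ s, |dvis P Ptr μ θ u t s| * ∑ a, |dpol P θ v s a|
              ≤ ∑ s, |dvis P Ptr μ θ u t s| * (2 * SV) :=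
                Finset.sum_le_sum fun s _ => mul_le_mul_of_nonneg_left
                  (sum_abs_dpol_le P hDAG θ v Mv hMv hMv0 s) (abs_nonneg _)
            _ = (∑ s, |dvis P Ptr μ θ u t s|) * (2 * SV) := by rw [Finset.sum_mul]
            _ ≤ ((2 * SU) * t) * (2 * SV) := by
                refine mul_le_mul_of_nonneg_right ?_ ?_
                · exact sum_abs_dvis_le P Ptr μ hDAG hPtr hμ θ u Mu hMu hMu0 t
                · have := Finset.sum_nonneg fun i (_ : i ∈ Finset.univ) => hMv0 i
                  rw [← hSV] at this
                  linarith
        · calc ∑ s, visit Ptr (bnPol P θ) μ t s * ∑ a, |ddpol P θ u v s a|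
              ≤ ∑ s, visit Ptr (bnPol P θ) μ t s * B2 :=
                Finset.sum_le_sum fun s _ => mul_le_mul_of_nonneg_left
                  (sum_abs_ddpol_le P hDAG θ u v Mu Mv hMu hMv hMu0 hMv0 s)
                  (visit_nonneg P Ptr μ hPtr hμ θ t s)
            _ = B2 := by
                rw [← Finset.sum_mul, visit_sum_one P Ptr μ hDAG hPtr hμ θ t, one_mul]

lemma sum_sum_mix_zero (hDAG : IsDAG P) (hPtr : IsKernel Ptr) (hμ : IsDist μ)
    (θ u v : Param S A P) (t : ℕ) :
    ∑ s, ∑ a, (ddvis P Ptr μ θ u v t s * bnPol P θ s a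
        + dvis P Ptr μ θ v t s * dpol P θ u s a
        + dvis P Ptr μ θ u t s * dpol P θ v s a
        + visit Ptr (bnPol P θ) μ t s * ddpol P θ u v s a) = 0 := by
  have hexp : ∀ s : S, ∑ a, (ddvis P Ptr μ θ u v t s * bnPol P θ s a
      + dvis P Ptr μ θ v t s * dpol P θ u s a
      + dvis P Ptr μ θ u t s * dpol P θ v s a
      + visit Ptr (bnPol P θ) μ t s * ddpol P θ u v s a)
      = ddvis P Ptr μ θ u v t s := by
    intro s
    rw [Finset.sum_add_distrib, Finset.sum_add_distrib, Finset.sum_add_distrib]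
    rw [← Finset.mul_sum, ← Finset.mul_sum, ← Finset.mul_sum, ← Finset.mul_sum]
    rw [bnPol_sum_one P hDAG θ s, sum_dpol_zero P hDAG θ u s, sum_dpol_zero P hDAG θ v s,
      sum_ddpol_zero P hDAG θ u v s]
    ring
  rw [Finset.sum_congr rfl fun s _ => hexp s]
  exact sum_ddvis_zero P Ptr μ hDAG hPtr hμ θ u v t

lemma abs_ddhfun_le (hDAG : IsDAG P) (hPtr : IsKernel Ptr) (hμ : IsDist μ)
    (rmin rmax : ℝ) (hr : ∀ s a, rmin ≤ r s a ∧ r s a ≤ rmax)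
    (θ u v : Param S A P) (Mu Mv : Fin N → ℝ)
    (hMu : ∀ i s p b, |u i s p b| ≤ Mu i) (hMv : ∀ i s p b, |v i s p b| ≤ Mv i)
    (hMu0 : ∀ i, 0 ≤ Mu i) (hMv0 : ∀ i, 0 ≤ Mv i) (t : ℕ) :
    |ddhfun P Ptr r μ θ u v t| ≤ (rmax - rmin) *
      ((4 * (∑ i, Mu i) * (∑ i, Mv i) * (t * ((t:ℝ) - 1))
          + (∑ i, ((∑ i' ∈ Finset.univ.erase i, 4 * Mu i' * Mv i) + 6 * Mu i * Mv i)) * t)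
        + (2 * ∑ i, Mv i) * t * (2 * ∑ i, Mu i)
        + (2 * ∑ i, Mu i) * t * (2 * ∑ i, Mv i)
        + (∑ i, ((∑ i' ∈ Finset.univ.erase i, 4 * Mu i' * Mv i) + 6 * Mu i * Mv i))) := by
  have hcent : ddhfun P Ptr r μ θ u v t
      = ∑ s, ∑ a, (ddvis P Ptr μ θ u v t s * bnPol P θ s a
          + dvis P Ptr μ θ v t s * dpol P θ u s a
          + dvis P Ptr μ θ u t s * dpol P θ v s a
          + visit Ptr (bnPol P θ) μ t s * ddpol P θ u v s a) * (r s a - rmin) := by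
    unfold ddhfun
    have : ∀ s a, (ddvis P Ptr μ θ u v t s * bnPol P θ s a
          + dvis P Ptr μ θ v t s * dpol P θ u s a
          + dvis P Ptr μ θ u t s * dpol P θ v s a
          + visit Ptr (bnPol P θ) μ t s * ddpol P θ u v s a) * (r s a - rmin)
        = (ddvis P Ptr μ θ u v t s * bnPol P θ s a
          + dvis P Ptr μ θ v t s * dpol P θ u s a
          + dvis P Ptr μ θ u t s * dpol P θ v s a
          + visit Ptr (bnPol P θ) μ t s * ddpol P θ u v s a) * r s a
        - (ddvis P Ptr μ θ u v t s * bnPol P θ s a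
          + dvis P Ptr μ θ v t s * dpol P θ u s a
          + dvis P Ptr μ θ u t s * dpol P θ v s a
          + visit Ptr (bnPol P θ) μ t s * ddpol P θ u v s a) * rmin := fun s a => by ring
    rw [Finset.sum_congr rfl fun s _ => Finset.sum_congr rfl fun a _ => this s a]
    rw [Finset.sum_congr rfl fun s (_ : s ∈ Finset.univ) => Finset.sum_sub_distrib _ _,
      Finset.sum_sub_distrib]
    rw [Finset.sum_congr rfl fun s (_ : s ∈ Finset.univ) => (Finset.sum_mul _ _ rmin).symm,
      ← Finset.sum_mul, sum_sum_mix_zero P Ptr μ hDAG hPtr hμ θ u v t, zero_mul, sub_zero]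
  rw [hcent]
  calc |∑ s, ∑ a, (ddvis P Ptr μ θ u v t s * bnPol P θ s a
        + dvis P Ptr μ θ v t s * dpol P θ u s a
        + dvis P Ptr μ θ u t s * dpol P θ v s a
        + visit Ptr (bnPol P θ) μ t s * ddpol P θ u v s a) * (r s a - rmin)|
      ≤ ∑ s, ∑ a, |ddvis P Ptr μ θ u v t s * bnPol P θ s a
        + dvis P Ptr μ θ v t s * dpol P θ u s a
        + dvis P Ptr μ θ u t s * dpol P θ v s a
        + visit Ptr (bnPol P θ) μ t s * ddpol P θ u v s a| * (rmax - rmin) := by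
        refine (Finset.abs_sum_le_sum_abs _ _).trans (Finset.sum_le_sum fun s _ => ?_)
        refine (Finset.abs_sum_le_sum_abs _ _).trans (Finset.sum_le_sum fun a _ => ?_)
        rw [abs_mul]
        refine mul_le_mul_of_nonneg_left ?_ (abs_nonneg _)
        rw [abs_of_nonneg (by linarith [(hr s a).1] : (0:ℝ) ≤ r s a - rmin)]
        linarith [(hr s a).2]
    _ = (∑ s, ∑ a, |ddvis P Ptr μ θ u v t s * bnPol P θ s a
        + dvis P Ptr μ θ v t s * dpol P θ u s a
        + dvis P Ptr μ θ u t s * dpol P θ v s a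
        + visit Ptr (bnPol P θ) μ t s * ddpol P θ u v s a|) * (rmax - rmin) := by
        rw [Finset.sum_mul]
        exact Finset.sum_congr rfl fun s _ => by rw [Finset.sum_mul]
    _ ≤ _ := by
        rw [mul_comm (rmax - rmin) _]
        refine mul_le_mul_of_nonneg_right
          (sum_sum_abs_mix_le P Ptr μ hDAG hPtr hμ θ u v Mu Mv hMu hMv hMu0 hMv0 t) ?_
        have s0 : S := Classical.arbitrary S
        have a0 : JointAct A := fun i => Classical.arbitrary (A i)
        linarith [(hr s0 a0).1, (hr s0 a0).2]

end Smooth9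
section Smooth10
set_option linter.unusedSectionVars false
set_option linter.unusedVariables false
set_option maxHeartbeats 1000000

variable (P : Fin N → Finset (Fin N)) (γ : ℝ) (Ptr : S → JointAct A → S → ℝ)
  (r : S → JointAct A → ℝ) (μ : S → ℝ)

lemma nat_mul_sub_one_nonneg (t : ℕ) : 0 ≤ (t:ℝ) * ((t:ℝ) - 1) := by
  cases t with
  | zero => simp
  | succ n =>
    push_cast
    have : (0:ℝ) ≤ n := Nat.cast_nonneg n
    nlinarith

lemma Qbound (hN : 1 ≤ N) (Mu Mv : Fin N → ℝ) (hMu0 : ∀ i, 0 ≤ Mu i) (hMv0 : ∀ i, 0 ≤ Mv i)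
    (hU2 : ∑ i, Mu i ^ 2 ≤ 1) (hV2 : ∑ i, Mv i ^ 2 ≤ 1) (t : ℕ) :
    (4 * (∑ i, Mu i) * (∑ i, Mv i) * ((t:ℝ) * ((t:ℝ) - 1))
      + (∑ i, ((∑ i' ∈ Finset.univ.erase i, 4 * Mu i' * Mv i) + 6 * Mu i * Mv i)) * t)
      + (2 * ∑ i, Mv i) * t * (2 * ∑ i, Mu i)
      + (2 * ∑ i, Mu i) * t * (2 * ∑ i, Mv i)
      + (∑ i, ((∑ i' ∈ Finset.univ.erase i, 4 * Mu i' * Mv i) + 6 * Mu i * Mv i))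
    ≤ 4 * N * (((t:ℝ) + 1) * ((t:ℝ) + 2)) := by
  set SU := ∑ i, Mu i with hSU
  set SV := ∑ i, Mv i with hSV
  have hSU0 : 0 ≤ SU := Finset.sum_nonneg fun i _ => hMu0 i
  have hSV0 : 0 ≤ SV := Finset.sum_nonneg fun i _ => hMv0 i
  have hNR : (1:ℝ) ≤ (N:ℝ) := by exact_mod_cast hN
  -- SU * SV ≤ N
  have hsqrt : ∀ (M : Fin N → ℝ), (∀ i, 0 ≤ M i) → (∑ i, M i ^ 2 ≤ 1) →
      ∑ i, M i ≤ Real.sqrt N := by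
    intro M hM0 hM2
    have h1 : ∑ i, M i * 1 ≤ Real.sqrt (∑ i, M i ^ 2) * Real.sqrt (∑ i : Fin N, (1:ℝ) ^ 2) :=
      Real.sum_mul_le_sqrt_mul_sqrt Finset.univ M (fun _ => 1)
    have h2 : ∑ i : Fin N, (1:ℝ) ^ 2 = (N:ℝ) := by
      simp [Finset.card_univ]
    rw [h2] at h1
    have h3 : Real.sqrt (∑ i, M i ^ 2) ≤ 1 := by
      rw [show (1:ℝ) = Real.sqrt 1 from (Real.sqrt_one).symm]
      exact Real.sqrt_le_sqrt hM2
    calc ∑ i, M i = ∑ i, M i * 1 := by simp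
      _ ≤ Real.sqrt (∑ i, M i ^ 2) * Real.sqrt N := h1
      _ ≤ 1 * Real.sqrt N := by
          exact mul_le_mul_of_nonneg_right h3 (Real.sqrt_nonneg _)
      _ = Real.sqrt N := one_mul _
  have hprod : SU * SV ≤ (N:ℝ) := by
    calc SU * SV ≤ Real.sqrt N * Real.sqrt N :=
        mul_le_mul (hsqrt Mu hMu0 hU2) (hsqrt Mv hMv0 hV2) hSV0 (Real.sqrt_nonneg _)
      _ = (N:ℝ) := Real.mul_self_sqrt (Nat.cast_nonneg N)
  -- cross term
  set cross := ∑ i, ∑ i' ∈ Finset.univ.erase i, Mu i' * Mv i with hcrossdef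
  have hcross : cross ≤ (N:ℝ) - 1 := by
    have h2c : 2 * cross ≤ ∑ i, ((∑ i', Mu i' ^ 2) - Mu i ^ 2 + ((N:ℝ) - 1) * Mv i ^ 2) := by
      rw [hcrossdef, Finset.mul_sum]
      refine Finset.sum_le_sum fun i _ => ?_
      have inner : ∑ i' ∈ Finset.univ.erase i, (Mu i' ^ 2 + Mv i ^ 2)
          = (∑ i', Mu i' ^ 2) - Mu i ^ 2 + ((N:ℝ) - 1) * Mv i ^ 2 := by
        rw [Finset.sum_add_distrib, Finset.sum_erase_eq_sub (Finset.mem_univ i),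
          Finset.sum_const, Finset.card_erase_of_mem (Finset.mem_univ i),
          Finset.card_univ, Fintype.card_fin, nsmul_eq_mul, Nat.cast_sub hN, Nat.cast_one]
      rw [← inner, Finset.mul_sum]
      refine Finset.sum_le_sum fun i' _ => ?_
      nlinarith [sq_nonneg (Mu i' - Mv i)]
    have hsum : ∑ i, ((∑ i', Mu i' ^ 2) - Mu i ^ 2 + ((N:ℝ) - 1) * Mv i ^ 2)
        = (N:ℝ) * (∑ i', Mu i' ^ 2) - (∑ i, Mu i ^ 2) + ((N:ℝ) - 1) * ∑ i, Mv i ^ 2 := by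
      rw [Finset.sum_add_distrib, Finset.sum_sub_distrib, Finset.sum_const,
        Finset.card_univ, Fintype.card_fin, nsmul_eq_mul, ← Finset.mul_sum]
    rw [hsum] at h2c
    have hU0 : 0 ≤ ∑ i, Mu i ^ 2 := Finset.sum_nonneg fun i _ => sq_nonneg _
    have hV0 : 0 ≤ ∑ i, Mv i ^ 2 := Finset.sum_nonneg fun i _ => sq_nonneg _
    nlinarith
  have hdiag : ∑ i, Mu i * Mv i ≤ 1 := by
    have h2d : 2 * ∑ i, Mu i * Mv i ≤ (∑ i, Mu i ^ 2) + ∑ i, Mv i ^ 2 := by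
      rw [Finset.mul_sum, ← Finset.sum_add_distrib]
      refine Finset.sum_le_sum fun i _ => ?_
      nlinarith [sq_nonneg (Mu i - Mv i)]
    linarith
  set B2 := ∑ i, ((∑ i' ∈ Finset.univ.erase i, 4 * Mu i' * Mv i) + 6 * Mu i * Mv i) with hB2def
  have hB2 : B2 ≤ 4 * (N:ℝ) + 2 := by
    have hexp : B2 = 4 * cross + 6 * ∑ i, Mu i * Mv i := by
      rw [hB2def, hcrossdef, Finset.sum_add_distrib, Finset.mul_sum, Finset.mul_sum]
      congr 1
      · refine Finset.sum_congr rfl fun i _ => ?_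
        rw [Finset.mul_sum]
        exact Finset.sum_congr rfl fun i' _ => by ring
      · exact Finset.sum_congr rfl fun i _ => by ring
    rw [hexp]
    linarith
  have hB20 : 0 ≤ B2 := by
    refine Finset.sum_nonneg fun i _ => add_nonneg (Finset.sum_nonneg fun i' _ => ?_) ?_
    · exact mul_nonneg (mul_nonneg (by norm_num) (hMu0 i')) (hMv0 i)
    · have := mul_nonneg (hMu0 i) (hMv0 i)
      linarith
  have htt := nat_mul_sub_one_nonneg t
  have hx : (0:ℝ) ≤ (t:ℝ) := Nat.cast_nonneg t
  have hSUSV0 : 0 ≤ SU * SV := mul_nonneg hSU0 hSV0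
  have h1 : 4 * SU * SV * ((t:ℝ) * ((t:ℝ) - 1)) ≤ 4 * (N:ℝ) * ((t:ℝ) * ((t:ℝ) - 1)) := by
    nlinarith
  have h2 : (2 * SV) * (t:ℝ) * (2 * SU) + (2 * SU) * (t:ℝ) * (2 * SV)
      ≤ 8 * (N:ℝ) * (t:ℝ) := by
    nlinarith
  have h3 : B2 * (t:ℝ) + B2 ≤ (4 * (N:ℝ) + 2) * ((t:ℝ) + 1) := by
    nlinarith
  nlinarith

lemma summable_quad {γ : ℝ} (hγ0 : 0 ≤ γ) (hγ1 : γ < 1) :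
    Summable (fun t : ℕ => ((t:ℝ) + 1) * ((t:ℝ) + 2) * γ ^ t) := by
  have hγn : ‖γ‖ < 1 := by rwa [Real.norm_eq_abs, abs_of_nonneg hγ0]
  have s0 : Summable (fun t : ℕ => γ ^ t) := summable_geometric_of_lt_one hγ0 hγ1
  have s1 : Summable (fun t : ℕ => (t:ℝ) * γ ^ t) := by
    simpa using summable_pow_mul_geometric_of_norm_lt_one (R := ℝ) 1 hγn
  have s2 : Summable (fun t : ℕ => (t:ℝ) ^ 2 * γ ^ t) :=
    summable_pow_mul_geometric_of_norm_lt_one (R := ℝ) 2 hγn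
  have h : (fun t : ℕ => ((t:ℝ) + 1) * ((t:ℝ) + 2) * γ ^ t)
      = fun t : ℕ => ((t:ℝ)^2 * γ^t + 3 * ((t:ℝ) * γ^t)) + 2 * γ^t := by
    funext t
    ring
  rw [h]
  exact (s2.add (s1.mul_left 3)).add (s0.mul_left 2)

lemma summable_dhfun (hDAG : IsDAG P) (hγ0 : 0 ≤ γ) (hγ1 : γ < 1)
    (hPtr : IsKernel Ptr) (hμ : IsDist μ)
    (R0 : ℝ) (hR0 : ∀ s a, |r s a| ≤ R0) (hR00 : 0 ≤ R0)
    (θ w : Param S A P) (Mw : Fin N → ℝ)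
    (hMw : ∀ i s p b, |w i s p b| ≤ Mw i) (hMw0 : ∀ i, 0 ≤ Mw i) :
    Summable (fun t : ℕ => γ ^ t * dhfun P Ptr r μ θ w t) := by
  have hsb : Summable (fun t : ℕ => γ ^ t * (R0 * ((2 * ∑ i, Mw i) * t + (2 * ∑ i, Mw i)))) := by
    have : (fun t : ℕ => γ ^ t * (R0 * ((2 * ∑ i, Mw i) * t + (2 * ∑ i, Mw i))))
        = fun t : ℕ => γ ^ t * ((R0 * (2 * ∑ i, Mw i)) * t + R0 * (2 * ∑ i, Mw i)) := by
      funext t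
      ring
    rw [this]
    exact summable_bound_aux γ hγ0 hγ1 _ _
  refine Summable.of_norm_bounded hsb fun t => ?_
  rw [Real.norm_eq_abs, abs_mul, abs_of_nonneg (pow_nonneg hγ0 t)]
  exact mul_le_mul_of_nonneg_left
    (abs_dhfun_le P Ptr r μ hDAG hPtr hμ R0 hR0 hR00 θ w Mw hMw hMw0 t)
    (pow_nonneg hγ0 t)

lemma hasDerivAt_Phi (hDAG : IsDAG P) (hγ0 : 0 ≤ γ) (hγ1 : γ < 1)
    (hPtr : IsKernel Ptr) (hμ : IsDist μ) (hN : 1 ≤ N)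
    (rmin rmax : ℝ) (hr : ∀ s a, rmin ≤ r s a ∧ r s a ≤ rmax)
    (R0 : ℝ) (hR0 : ∀ s a, |r s a| ≤ R0) (hR00 : 0 ≤ R0)
    (θ u v : Param S A P) (Mu Mv : Fin N → ℝ)
    (hMu : ∀ i s p b, |u i s p b| ≤ Mu i) (hMv : ∀ i s p b, |v i s p b| ≤ Mv i)
    (hMu0 : ∀ i, 0 ≤ Mu i) (hMv0 : ∀ i, 0 ≤ Mv i)
    (hU2 : ∑ i, Mu i ^ 2 ≤ 1) (hV2 : ∑ i, Mv i ^ 2 ≤ 1) (τ₀ : ℝ) :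
    HasDerivAt (fun τ => Phi P γ Ptr r μ (θ + τ • u) v)
      (∑' t : ℕ, γ ^ t * ddhfun P Ptr r μ (θ + τ₀ • u) u v t) τ₀ := by
  have hc : (0:ℝ) ≤ rmax - rmin := by
    have s0 : S := Classical.arbitrary S
    have a0 : JointAct A := fun i => Classical.arbitrary (A i)
    linarith [(hr s0 a0).1, (hr s0 a0).2]
  have key : ∀ (θ' : Param S A P) (t : ℕ),
      |ddhfun P Ptr r μ θ' u v t|
        ≤ (rmax - rmin) * (4 * N * (((t:ℝ) + 1) * ((t:ℝ) + 2))) := fun θ' t => by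
    refine (abs_ddhfun_le P Ptr r μ hDAG hPtr hμ rmin rmax hr θ' u v Mu Mv
      hMu hMv hMu0 hMv0 t).trans ?_
    exact mul_le_mul_of_nonneg_left (Qbound hN Mu Mv hMu0 hMv0 hU2 hV2 t) hc
  have hu : Summable (fun t : ℕ =>
      γ ^ t * ((rmax - rmin) * (4 * N * (((t:ℝ) + 1) * ((t:ℝ) + 2))))) := by
    have : (fun t : ℕ => γ ^ t * ((rmax - rmin) * (4 * N * (((t:ℝ) + 1) * ((t:ℝ) + 2)))))
        = fun t : ℕ => ((rmax - rmin) * (4 * N)) * (((t:ℝ) + 1) * ((t:ℝ) + 2) * γ ^ t) := by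
      funext t
      ring
    rw [this]
    exact (summable_quad hγ0 hγ1).mul_left _
  exact hasDerivAt_tsum hu
    (fun t τ => (hasDerivAt_dhfun P Ptr r μ θ u v t τ).const_mul (γ ^ t))
    (fun t τ => by
      rw [Real.norm_eq_abs, abs_mul, abs_of_nonneg (pow_nonneg hγ0 t)]
      exact mul_le_mul_of_nonneg_left (key (θ + τ • u) t) (pow_nonneg hγ0 t))
    (summable_dhfun P γ Ptr r μ hDAG hγ0 hγ1 hPtr hμ R0 hR0 hR00
      (θ + (0:ℝ) • u) v Mv hMv hMv0) τ₀

lemma abs_tsum_ddhfun_le (hDAG : IsDAG P) (hγ0 : 0 ≤ γ) (hγ1 : γ < 1)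
    (hPtr : IsKernel Ptr) (hμ : IsDist μ) (hN : 1 ≤ N)
    (rmin rmax : ℝ) (hr : ∀ s a, rmin ≤ r s a ∧ r s a ≤ rmax)
    (θ u v : Param S A P) (Mu Mv : Fin N → ℝ)
    (hMu : ∀ i s p b, |u i s p b| ≤ Mu i) (hMv : ∀ i s p b, |v i s p b| ≤ Mv i)
    (hMu0 : ∀ i, 0 ≤ Mu i) (hMv0 : ∀ i, 0 ≤ Mv i)
    (hU2 : ∑ i, Mu i ^ 2 ≤ 1) (hV2 : ∑ i, Mv i ^ 2 ≤ 1) :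
    |∑' t : ℕ, γ ^ t * ddhfun P Ptr r μ θ u v t|
      ≤ (rmax - rmin) * (4 * N) * (2 / (1 - γ) ^ 3) := by
  have hc : (0:ℝ) ≤ rmax - rmin := by
    have s0 : S := Classical.arbitrary S
    have a0 : JointAct A := fun i => Classical.arbitrary (A i)
    linarith [(hr s0 a0).1, (hr s0 a0).2]
  have key : ∀ t : ℕ, |γ ^ t * ddhfun P Ptr r μ θ u v t|
      ≤ ((rmax - rmin) * (4 * N)) * (((t:ℝ) + 1) * ((t:ℝ) + 2) * γ ^ t) := fun t => by
    rw [abs_mul, abs_of_nonneg (pow_nonneg hγ0 t)]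
    have h1 := (abs_ddhfun_le P Ptr r μ hDAG hPtr hμ rmin rmax hr θ u v Mu Mv
      hMu hMv hMu0 hMv0 t).trans
      (mul_le_mul_of_nonneg_left (Qbound hN Mu Mv hMu0 hMv0 hU2 hV2 t) hc)
    calc γ ^ t * |ddhfun P Ptr r μ θ u v t|
        ≤ γ ^ t * ((rmax - rmin) * (4 * N * (((t:ℝ) + 1) * ((t:ℝ) + 2)))) :=
          mul_le_mul_of_nonneg_left h1 (pow_nonneg hγ0 t)
      _ = ((rmax - rmin) * (4 * N)) * (((t:ℝ) + 1) * ((t:ℝ) + 2) * γ ^ t) := by ring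
  have hs : Summable (fun t : ℕ =>
      ((rmax - rmin) * (4 * N)) * (((t:ℝ) + 1) * ((t:ℝ) + 2) * γ ^ t)) :=
    (summable_quad hγ0 hγ1).mul_left _
  have hsabs : Summable (fun t : ℕ => |γ ^ t * ddhfun P Ptr r μ θ u v t|) :=
    Summable.of_nonneg_of_le (fun t => abs_nonneg _) key hs
  calc |∑' t : ℕ, γ ^ t * ddhfun P Ptr r μ θ u v t|
      ≤ ∑' t : ℕ, |γ ^ t * ddhfun P Ptr r μ θ u v t| := by
        have h := norm_tsum_le_tsum_norm
          (f := fun t : ℕ => γ ^ t * ddhfun P Ptr r μ θ u v t)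
          (by simpa only [Real.norm_eq_abs] using hsabs)
        simpa only [Real.norm_eq_abs] using h
    _ ≤ ∑' t : ℕ, ((rmax - rmin) * (4 * N)) * (((t:ℝ) + 1) * ((t:ℝ) + 2) * γ ^ t) :=
        Summable.tsum_le_tsum key hsabs hs
    _ = ((rmax - rmin) * (4 * N)) * ∑' t : ℕ, (((t:ℝ) + 1) * ((t:ℝ) + 2) * γ ^ t) :=
        tsum_mul_left
    _ = (rmax - rmin) * (4 * N) * (2 / (1 - γ) ^ 3) := by
        rw [tsum_quad_geometric hγ0 hγ1]

end Smooth10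
section Smooth11
set_option linter.unusedSectionVars false
set_option linter.unusedVariables false
set_option maxHeartbeats 1000000

variable (P : Fin N → Finset (Fin N)) (γ : ℝ) (Ptr : S → JointAct A → S → ℝ)
  (r : S → JointAct A → ℝ) (μ : S → ℝ)

/-- Per-agent block Euclidean norm of a parameter vector. -/
noncomputable def blockNorm (w : Param S A P) (i : Fin N) : ℝ :=
  Real.sqrt (∑ s, ∑ p, ∑ b, (w i s p b) ^ 2)

lemma blockNorm_nonneg (w : Param S A P) (i : Fin N) : 0 ≤ blockNorm P w i :=
  Real.sqrt_nonneg _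

lemma abs_le_blockNorm (w : Param S A P) (i : Fin N) (s : S) (p : ParAct A P i) (b : A i) :
    |w i s p b| ≤ blockNorm P w i := by
  have h1 : (w i s p b) ^ 2 ≤ ∑ b', (w i s p b') ^ 2 :=
    Finset.single_le_sum (f := fun b' => (w i s p b') ^ 2)
      (fun b' _ => sq_nonneg _) (Finset.mem_univ b)
  have h2 : ∑ b', (w i s p b') ^ 2 ≤ ∑ p', ∑ b', (w i s p' b') ^ 2 :=
    Finset.single_le_sum (f := fun p' => ∑ b', (w i s p' b') ^ 2)
      (fun p' _ => Finset.sum_nonneg fun b' _ => sq_nonneg _) (Finset.mem_univ p)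
  have h3 : ∑ p', ∑ b', (w i s p' b') ^ 2 ≤ ∑ s', ∑ p', ∑ b', (w i s' p' b') ^ 2 :=
    Finset.single_le_sum (f := fun s' => ∑ p', ∑ b', (w i s' p' b') ^ 2)
      (fun s' _ => Finset.sum_nonneg fun p' _ => Finset.sum_nonneg fun b' _ => sq_nonneg _)
      (Finset.mem_univ s)
  have := Real.sqrt_le_sqrt ((h1.trans h2).trans h3)
  rwa [Real.sqrt_sq_eq_abs] at this

lemma blockNorm_sq (w : Param S A P) (i : Fin N) :
    blockNorm P w i ^ 2 = ∑ s, ∑ p, ∑ b, (w i s p b) ^ 2 :=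
  Real.sq_sqrt (Finset.sum_nonneg fun s _ => Finset.sum_nonneg fun p _ =>
    Finset.sum_nonneg fun b _ => sq_nonneg _)

lemma dloc_add (θ x y : Param S A P) (i : Fin N) (s : S) (p : ParAct A P i) (b : A i) :
    dloc P θ (x + y) i s p b = dloc P θ x i s p b + dloc P θ y i s p b := by
  unfold dloc
  simp only [Pi.add_apply]
  have h : ∑ c, locPol P θ i s p c * (x i s p c + y i s p c)
      = (∑ c, locPol P θ i s p c * x i s p c) + ∑ c, locPol P θ i s p c * y i s p c := by
    rw [← Finset.sum_add_distrib]
    exact Finset.sum_congr rfl fun c _ => by ring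
  rw [h]
  ring

lemma dloc_smul (θ x : Param S A P) (cs : ℝ) (i : Fin N) (s : S) (p : ParAct A P i) (b : A i) :
    dloc P θ (cs • x) i s p b = cs * dloc P θ x i s p b := by
  unfold dloc
  simp only [Pi.smul_apply, smul_eq_mul]
  have h : ∑ c, locPol P θ i s p c * (cs * x i s p c)
      = cs * ∑ c, locPol P θ i s p c * x i s p c := by
    rw [Finset.mul_sum]
    exact Finset.sum_congr rfl fun c _ => by ring
  rw [h]
  ring

lemma dpol_add (θ x y : Param S A P) (s : S) (a : JointAct A) :
    dpol P θ (x + y) s a = dpol P θ x s a + dpol P θ y s a := by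
  unfold dpol
  rw [← Finset.sum_add_distrib]
  refine Finset.sum_congr rfl fun i _ => ?_
  rw [dloc_add]
  ring

lemma dpol_smul (θ x : Param S A P) (cs : ℝ) (s : S) (a : JointAct A) :
    dpol P θ (cs • x) s a = cs * dpol P θ x s a := by
  unfold dpol
  rw [Finset.mul_sum]
  refine Finset.sum_congr rfl fun i _ => ?_
  rw [dloc_smul]
  ring

lemma dvis_add (θ x y : Param S A P) (t : ℕ) (s : S) :
    dvis P Ptr μ θ (x + y) t s = dvis P Ptr μ θ x t s + dvis P Ptr μ θ y t s := by
  induction t generalizing s with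
  | zero => simp [dvis]
  | succ t ih =>
    show (∑ s₀, ∑ a, _) = (∑ s₀, ∑ a, _) + (∑ s₀, ∑ a, _)
    rw [← Finset.sum_add_distrib]
    refine Finset.sum_congr rfl fun s₀ _ => ?_
    rw [← Finset.sum_add_distrib]
    refine Finset.sum_congr rfl fun a _ => ?_
    rw [ih, dpol_add]
    ring

lemma dvis_smul (θ x : Param S A P) (cs : ℝ) (t : ℕ) (s : S) :
    dvis P Ptr μ θ (cs • x) t s = cs * dvis P Ptr μ θ x t s := by
  induction t generalizing s with
  | zero => simp [dvis]
  | succ t ih =>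
    show (∑ s₀, ∑ a, _) = cs * ∑ s₀, ∑ a, _
    rw [Finset.mul_sum]
    refine Finset.sum_congr rfl fun s₀ _ => ?_
    rw [Finset.mul_sum]
    refine Finset.sum_congr rfl fun a _ => ?_
    rw [ih, dpol_smul]
    ring

lemma dhfun_add (θ x y : Param S A P) (t : ℕ) :
    dhfun P Ptr r μ θ (x + y) t = dhfun P Ptr r μ θ x t + dhfun P Ptr r μ θ y t := by
  unfold dhfun
  rw [← Finset.sum_add_distrib]
  refine Finset.sum_congr rfl fun s _ => ?_
  rw [← Finset.sum_add_distrib]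
  refine Finset.sum_congr rfl fun a _ => ?_
  rw [dvis_add, dpol_add]
  ring

lemma dhfun_smul (θ x : Param S A P) (cs : ℝ) (t : ℕ) :
    dhfun P Ptr r μ θ (cs • x) t = cs * dhfun P Ptr r μ θ x t := by
  unfold dhfun
  rw [Finset.mul_sum]
  refine Finset.sum_congr rfl fun s _ => ?_
  rw [Finset.mul_sum]
  refine Finset.sum_congr rfl fun a _ => ?_
  rw [dvis_smul, dpol_smul]
  ring

lemma Phi_add (hDAG : IsDAG P) (hγ0 : 0 ≤ γ) (hγ1 : γ < 1)
    (hPtr : IsKernel Ptr) (hμ : IsDist μ)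
    (R0 : ℝ) (hR0 : ∀ s a, |r s a| ≤ R0) (hR00 : 0 ≤ R0)
    (θ x y : Param S A P) :
    Phi P γ Ptr r μ θ (x + y) = Phi P γ Ptr r μ θ x + Phi P γ Ptr r μ θ y := by
  unfold Phi
  rw [show (fun t : ℕ => γ ^ t * dhfun P Ptr r μ θ (x + y) t)
      = fun t : ℕ => γ ^ t * dhfun P Ptr r μ θ x t + γ ^ t * dhfun P Ptr r μ θ y t from
    funext fun t => by rw [dhfun_add]; ring]
  exact Summable.tsum_add
    (summable_dhfun P γ Ptr r μ hDAG hγ0 hγ1 hPtr hμ R0 hR0 hR00 θ x (blockNorm P x)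
      (fun i s p b => abs_le_blockNorm P x i s p b) (fun i => blockNorm_nonneg P x i))
    (summable_dhfun P γ Ptr r μ hDAG hγ0 hγ1 hPtr hμ R0 hR0 hR00 θ y (blockNorm P y)
      (fun i s p b => abs_le_blockNorm P y i s p b) (fun i => blockNorm_nonneg P y i))

lemma Phi_smul (θ x : Param S A P) (cs : ℝ) :
    Phi P γ Ptr r μ θ (cs • x) = cs * Phi P γ Ptr r μ θ x := by
  unfold Phi
  rw [show (fun t : ℕ => γ ^ t * dhfun P Ptr r μ θ (cs • x) t)
      = fun t : ℕ => cs * (γ ^ t * dhfun P Ptr r μ θ x t) from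
    funext fun t => by rw [dhfun_smul]; ring]
  exact tsum_mul_left

lemma basis_apply_same (i : Fin N) (s : S) (p : ParAct A P i) (b : A i) :
    basis P i s p b i = fun s' p' a' => if s' = s ∧ p' = p ∧ a' = b then (1:ℝ) else 0 :=
  Pi.single_eq_same _ _

lemma param_eq_sum_basis (w : Param S A P) :
    w = ∑ i, ∑ s, ∑ p, ∑ b, w i s p b • basis P i s p b := by
  funext i₀ s₀ p₀ b₀
  simp only [Finset.sum_apply, Pi.smul_apply, smul_eq_mul]
  rw [Finset.sum_eq_single i₀]
  · simp only [basis_apply_same]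
    rw [Finset.sum_eq_single s₀]
    · rw [Finset.sum_eq_single p₀]
      · rw [Finset.sum_eq_single b₀]
        · rw [if_pos ⟨rfl, rfl, rfl⟩, mul_one]
        · intro b _ hne
          rw [if_neg (fun h => hne h.2.2.symm), mul_zero]
        · intro h
          exact absurd (Finset.mem_univ b₀) h
      · intro p _ hne
        refine Finset.sum_eq_zero fun b _ => ?_
        rw [if_neg (fun h => hne h.2.1.symm), mul_zero]
      · intro h
        exact absurd (Finset.mem_univ p₀) h
    · intro s _ hne
      refine Finset.sum_eq_zero fun p _ => Finset.sum_eq_zero fun b _ => ?_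
      rw [if_neg (fun h => hne h.1.symm), mul_zero]
    · intro h
      exact absurd (Finset.mem_univ s₀) h
  · intro i _ hne
    refine Finset.sum_eq_zero fun s _ => Finset.sum_eq_zero fun p _ =>
      Finset.sum_eq_zero fun b _ => ?_
    have hz : basis P i s p b i₀ = 0 := Pi.single_eq_of_ne (Ne.symm hne) _
    rw [hz]
    simp
  · intro h
    exact absurd (Finset.mem_univ i₀) h

end Smooth11
section Smooth12
set_option linter.unusedSectionVars false
set_option linter.unusedVariables false
set_option maxHeartbeats 2000000

theorem value_smoothness'
    (P : Fin N → Finset (Fin N)) (hDAG : IsDAG P)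
    (γ : ℝ) (hγ0 : 0 ≤ γ) (hγ1 : γ < 1)
    (Ptr : S → JointAct A → S → ℝ) (hPtr : IsKernel Ptr)
    (r : S → JointAct A → ℝ) (rmin rmax : ℝ)
    (hr : ∀ s a, rmin ≤ r s a ∧ r s a ≤ rmax)
    (μ : S → ℝ) (hμ : IsDist μ)
    (θt θ : Param S A P) :
    Real.sqrt (∑ i : Fin N, ∑ s : S, ∑ p : ParAct A P i, ∑ ai : A i,
        (gradV γ Ptr r μ P θt i s p ai - gradV γ Ptr r μ P θ i s p ai) ^ 2) ≤
      (8 * N * (rmax - rmin) / (1 - γ) ^ 3) *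
        Real.sqrt (∑ i : Fin N, ∑ s : S, ∑ p : ParAct A P i, ∑ ai : A i,
          (θt i s p ai - θ i s p ai) ^ 2) := by
  have hγd : (0:ℝ) < 1 - γ := by linarith
  have hc : (0:ℝ) ≤ rmax - rmin := by
    have s0 : S := Classical.arbitrary S
    have a0 : JointAct A := fun i => Classical.arbitrary (A i)
    linarith [(hr s0 a0).1, (hr s0 a0).2]
  have hK0 : (0:ℝ) ≤ 8 * N * (rmax - rmin) / (1 - γ) ^ 3 := by
    apply div_nonneg
    · have : (0:ℝ) ≤ (N:ℝ) := Nat.cast_nonneg N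
      nlinarith
    · positivity
  rcases Nat.eq_zero_or_pos N with hN0 | hNpos
  · subst hN0
    simp only [Finset.univ_eq_empty, Finset.sum_empty, Real.sqrt_zero, mul_zero, le_refl]
  have hN : 1 ≤ N := hNpos
  set R0 := |rmin| + |rmax| with hR0def
  have hR0 : ∀ s a, |r s a| ≤ R0 := fun s a => by
    rw [abs_le]
    constructor
    · have := (hr s a).1
      have := neg_abs_le rmin
      have := abs_nonneg rmax
      rw [hR0def]
      linarith
    · have := (hr s a).2
      have := le_abs_self rmax
      have := abs_nonneg rmin
      rw [hR0def]
      linarith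
  have hR00 : 0 ≤ R0 := add_nonneg (abs_nonneg _) (abs_nonneg _)
  classical
  set g : Param S A P := fun i s p ai =>
    gradV γ Ptr r μ P θt i s p ai - gradV γ Ptr r μ P θ i s p ai with hgdef
  have hSGg : (∑ i : Fin N, ∑ s : S, ∑ p : ParAct A P i, ∑ ai : A i,
      (gradV γ Ptr r μ P θt i s p ai - gradV γ Ptr r μ P θ i s p ai) ^ 2)
      = ∑ i, ∑ s, ∑ p, ∑ b, (g i s p b) ^ 2 := rfl
  set SG := ∑ i, ∑ s, ∑ p, ∑ b, (g i s p b) ^ 2 with hSGdef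
  set T2 := ∑ i : Fin N, ∑ s : S, ∑ p : ParAct A P i, ∑ ai : A i,
    (θt i s p ai - θ i s p ai) ^ 2 with hT2def
  rw [hSGg]
  have hT2nn : 0 ≤ T2 := Finset.sum_nonneg fun i _ => Finset.sum_nonneg fun s _ =>
    Finset.sum_nonneg fun p _ => Finset.sum_nonneg fun b _ => sq_nonneg _
  have hSGnn : 0 ≤ SG := Finset.sum_nonneg fun i _ => Finset.sum_nonneg fun s _ =>
    Finset.sum_nonneg fun p _ => Finset.sum_nonneg fun b _ => sq_nonneg _
  by_cases hT20 : T2 = 0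
  · -- θt = θ
    have hθeq : θt = θ := by
      funext i s p b
      have key : (θt i s p b - θ i s p b) ^ 2 = 0 := by
        have hle : (θt i s p b - θ i s p b) ^ 2 ≤ T2 := by
          rw [hT2def]
          calc (θt i s p b - θ i s p b) ^ 2
              ≤ ∑ b', (θt i s p b' - θ i s p b') ^ 2 :=
                Finset.single_le_sum (f := fun b' => (θt i s p b' - θ i s p b') ^ 2)
                  (fun _ _ => sq_nonneg _) (Finset.mem_univ b)
            _ ≤ ∑ p', ∑ b', (θt i s p' b' - θ i s p' b') ^ 2 :=
                Finset.single_le_sum (f := fun p' => ∑ b', (θt i s p' b' - θ i s p' b') ^ 2)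
                  (fun _ _ => Finset.sum_nonneg fun _ _ => sq_nonneg _) (Finset.mem_univ p)
            _ ≤ ∑ s', ∑ p', ∑ b', (θt i s' p' b' - θ i s' p' b') ^ 2 :=
                Finset.single_le_sum
                  (f := fun s' => ∑ p', ∑ b', (θt i s' p' b' - θ i s' p' b') ^ 2)
                  (fun _ _ => Finset.sum_nonneg fun _ _ => Finset.sum_nonneg fun _ _ =>
                    sq_nonneg _) (Finset.mem_univ s)
            _ ≤ ∑ i', ∑ s', ∑ p', ∑ b', (θt i' s' p' b' - θ i' s' p' b') ^ 2 :=
                Finset.single_le_sum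
                  (f := fun i' => ∑ s', ∑ p', ∑ b', (θt i' s' p' b' - θ i' s' p' b') ^ 2)
                  (fun _ _ => Finset.sum_nonneg fun _ _ => Finset.sum_nonneg fun _ _ =>
                    Finset.sum_nonneg fun _ _ => sq_nonneg _) (Finset.mem_univ i)
        have := le_antisymm (hle.trans_eq hT20) (sq_nonneg _)
        exact this
      have := pow_eq_zero_iff (n := 2) (by norm_num) |>.1 key
      linarith [sub_eq_zero.1 this]
    have hSG0 : SG = 0 := by
      rw [hSGdef]
      refine Finset.sum_eq_zero fun i _ => Finset.sum_eq_zero fun s _ =>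
        Finset.sum_eq_zero fun p _ => Finset.sum_eq_zero fun b _ => ?_
      rw [hgdef]
      simp [hθeq]
    rw [hSG0, Real.sqrt_zero]
    exact mul_nonneg hK0 (Real.sqrt_nonneg _)
  · have hT2pos : 0 < T2 := lt_of_le_of_ne hT2nn (Ne.symm hT20)
    set D := Real.sqrt T2 with hDdef
    have hDpos : 0 < D := Real.sqrt_pos.2 hT2pos
    have hDsq : D ^ 2 = T2 := Real.sq_sqrt hT2nn
    set u : Param S A P := D⁻¹ • (θt - θ) with hudef
    have hucoord : ∀ i s p b, u i s p b = D⁻¹ * (θt i s p b - θ i s p b) := fun i s p b => rfl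
    have hU2 : ∑ i, blockNorm P u i ^ 2 ≤ 1 := by
      have hcalc : ∑ i, blockNorm P u i ^ 2 = D⁻¹ ^ 2 * T2 := by
        calc ∑ i, blockNorm P u i ^ 2
            = ∑ i, ∑ s, ∑ p, ∑ b, (u i s p b) ^ 2 :=
              Finset.sum_congr rfl fun i _ => blockNorm_sq P u i
          _ = D⁻¹ ^ 2 * T2 := by
              rw [hT2def, Finset.mul_sum]
              refine Finset.sum_congr rfl fun i _ => ?_
              rw [Finset.mul_sum]
              refine Finset.sum_congr rfl fun s _ => ?_
              rw [Finset.mul_sum]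
              refine Finset.sum_congr rfl fun p _ => ?_
              rw [Finset.mul_sum]
              refine Finset.sum_congr rfl fun b _ => ?_
              rw [hucoord]
              ring
      rw [hcalc, ← hDsq]
      rw [show (D⁻¹) ^ 2 * D ^ 2 = 1 from by field_simp]
  -- expansion of Phi at g
    have hgradPhi : ∀ (θ' : Param S A P) i s p b,
        gradV γ Ptr r μ P θ' i s p b = Phi P γ Ptr r μ θ' (basis P i s p b) :=
      fun θ' i s p b =>
        gradV_eq_Phi P γ Ptr r μ hDAG hγ0 hγ1 hPtr hμ R0 hR0 hR00 θ' i s p b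
    have hexpand : ∀ θ' : Param S A P, Phi P γ Ptr r μ θ' g
        = ∑ i, ∑ s, ∑ p, ∑ b, g i s p b * Phi P γ Ptr r μ θ' (basis P i s p b) := by
      intro θ'
      let L : Param S A P →ₗ[ℝ] ℝ :=
        { toFun := Phi P γ Ptr r μ θ'
          map_add' := fun x y =>
            Phi_add P γ Ptr r μ hDAG hγ0 hγ1 hPtr hμ R0 hR0 hR00 θ' x y
          map_smul' := fun cs x => by
            simpa [smul_eq_mul] using Phi_smul P γ Ptr r μ θ' x cs }
      have hLg : Phi P γ Ptr r μ θ' g = L g := rfl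
      rw [hLg]
      conv_lhs => rw [param_eq_sum_basis P g]
      rw [map_sum]
      refine Finset.sum_congr rfl fun i _ => ?_
      rw [map_sum]
      refine Finset.sum_congr rfl fun s _ => ?_
      rw [map_sum]
      refine Finset.sum_congr rfl fun p _ => ?_
      rw [map_sum]
      refine Finset.sum_congr rfl fun b _ => ?_
      rw [LinearMap.map_smul]
      rfl
    have hdiff : Phi P γ Ptr r μ θt g - Phi P γ Ptr r μ θ g = SG := by
      rw [hexpand θt, hexpand θ, hSGdef, ← Finset.sum_sub_distrib]
      refine Finset.sum_congr rfl fun i _ => ?_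
      rw [← Finset.sum_sub_distrib]
      refine Finset.sum_congr rfl fun s _ => ?_
      rw [← Finset.sum_sub_distrib]
      refine Finset.sum_congr rfl fun p _ => ?_
      rw [← Finset.sum_sub_distrib]
      refine Finset.sum_congr rfl fun b _ => ?_
      rw [← mul_sub]
      rw [show Phi P γ Ptr r μ θt (basis P i s p b) - Phi P γ Ptr r μ θ (basis P i s p b)
          = g i s p b from by rw [← hgradPhi θt, ← hgradPhi θ]]
      ring
    by_cases hSG0 : SG = 0
    · rw [hSG0, Real.sqrt_zero]
      exact mul_nonneg hK0 (Real.sqrt_nonneg _)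
    · have hSGpos : 0 < SG := lt_of_le_of_ne hSGnn (Ne.symm hSG0)
      set Dv := Real.sqrt SG with hDvdef
      have hDvpos : 0 < Dv := Real.sqrt_pos.2 hSGpos
      have hDvsq : Dv ^ 2 = SG := Real.sq_sqrt hSGnn
      set v : Param S A P := Dv⁻¹ • g with hvdef
      have hvcoord : ∀ i s p b, v i s p b = Dv⁻¹ * g i s p b := fun i s p b => rfl
      have hV2 : ∑ i, blockNorm P v i ^ 2 ≤ 1 := by
        have hcalc : ∑ i, blockNorm P v i ^ 2 = Dv⁻¹ ^ 2 * SG := by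
          calc ∑ i, blockNorm P v i ^ 2
              = ∑ i, ∑ s, ∑ p, ∑ b, (v i s p b) ^ 2 :=
                Finset.sum_congr rfl fun i _ => blockNorm_sq P v i
            _ = Dv⁻¹ ^ 2 * SG := by
                rw [hSGdef, Finset.mul_sum]
                refine Finset.sum_congr rfl fun i _ => ?_
                rw [Finset.mul_sum]
                refine Finset.sum_congr rfl fun s _ => ?_
                rw [Finset.mul_sum]
                refine Finset.sum_congr rfl fun p _ => ?_
                rw [Finset.mul_sum]
                refine Finset.sum_congr rfl fun b _ => ?_
                rw [hvcoord]
                ring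
        rw [hcalc, ← hDvsq]
        rw [show (Dv⁻¹) ^ 2 * Dv ^ 2 = 1 from by field_simp]
      -- Mean value theorem along the segment
      set F : ℝ → ℝ := fun τ => Phi P γ Ptr r μ (θ + τ • u) v with hFdef
      set K0 := (rmax - rmin) * (4 * N) * (2 / (1 - γ) ^ 3) with hK0def
      have hMVT : ‖F D - F 0‖ ≤ K0 * (D - 0) := by
        refine norm_image_sub_le_of_norm_deriv_le_segment'
          (f' := fun τ => ∑' t : ℕ, γ ^ t * ddhfun P Ptr r μ (θ + τ • u) u v t)
          (fun τ _ => (hasDerivAt_Phi P γ Ptr r μ hDAG hγ0 hγ1 hPtr hμ hN rmin rmax hr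
            R0 hR0 hR00 θ u v (blockNorm P u) (blockNorm P v)
            (fun i s p b => abs_le_blockNorm P u i s p b)
            (fun i s p b => abs_le_blockNorm P v i s p b)
            (fun i => blockNorm_nonneg P u i) (fun i => blockNorm_nonneg P v i)
            hU2 hV2 τ).hasDerivWithinAt)
          (fun τ _ => ?_) D (Set.right_mem_Icc.2 hDpos.le)
        rw [Real.norm_eq_abs, hK0def]
        exact abs_tsum_ddhfun_le P γ Ptr r μ hDAG hγ0 hγ1 hPtr hμ hN rmin rmax hr
          (θ + τ • u) u v (blockNorm P u) (blockNorm P v)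
          (fun i s p b => abs_le_blockNorm P u i s p b)
          (fun i s p b => abs_le_blockNorm P v i s p b)
          (fun i => blockNorm_nonneg P u i) (fun i => blockNorm_nonneg P v i) hU2 hV2
      have hθD : θ + D • u = θt := by
        rw [hudef, smul_smul, mul_inv_cancel₀ hDpos.ne', one_smul]
        abel
      have hF0 : F 0 = Phi P γ Ptr r μ θ v := by
        rw [hFdef]
        simp only []
        rw [param_path_zero]
      have hFD : F D = Phi P γ Ptr r μ θt v := by
        rw [hFdef]
        simp only []
        rw [hθD]
      have hval : F D - F 0 = Dv := by
        rw [hFD, hF0, hvdef, Phi_smul, Phi_smul, ← mul_sub, hdiff, ← hDvsq]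
        field_simp
      rw [hval, Real.norm_eq_abs, abs_of_pos hDvpos, sub_zero] at hMVT
      calc Dv ≤ K0 * D := hMVT
        _ = (8 * N * (rmax - rmin) / (1 - γ) ^ 3) * D := by
            rw [hK0def]
            ring
end Smooth12
/-- Smoothness of `V` under the tabular BN softmax parameterization
(Lemma A.3): the gradient of `V` is `(8N(r_max−r_min)/(1−γ)³)`-Lipschitz in `θ`. -/
theorem value_smoothness
    (P : Fin N → Finset (Fin N)) (hDAG : IsDAG P)
    (γ : ℝ) (hγ0 : 0 ≤ γ) (hγ1 : γ < 1)
    (Ptr : S → JointAct A → S → ℝ) (hPtr : IsKernel Ptr)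
    (r : S → JointAct A → ℝ) (rmin rmax : ℝ)
    (hr : ∀ s a, rmin ≤ r s a ∧ r s a ≤ rmax)
    (μ : S → ℝ) (hμ : IsDist μ)
    (θt θ : Param S A P) :
    Real.sqrt (∑ i : Fin N, ∑ s : S, ∑ p : ParAct A P i, ∑ ai : A i,
        (gradV γ Ptr r μ P θt i s p ai - gradV γ Ptr r μ P θ i s p ai) ^ 2) ≤
      (8 * N * (rmax - rmin) / (1 - γ) ^ 3) *
        Real.sqrt (∑ i : Fin N, ∑ s : S, ∑ p : ParAct A P i, ∑ ai : A i,
          (θt i s p ai - θ i s p ai) ^ 2) := by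
  exact value_smoothness' P hDAG γ hγ0 hγ1 Ptr hPtr r rmin rmax hr μ hμ θt θ

end BNPG
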